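/- arXiv:2405.11469 — 11 statements merged into one kernel-verified Lean document; each statement's English description precedes it below -/
import Mathlib

section
/- Let p be a natural number, q = ⌊p/2⌋, and let c : ℤ → ℝ satisfy c_{-r} = c_r for all r ∈ ℤ, c_r = 0 whenever |r| > q, and Σ_{r∈ℤ} c_r = 1. Define τ_j = Σ_{r∈ℤ} c_r · B_{p+1}(r − j + 1/2) for j ∈ ℤ. Then Σ_{j=−2q}^{0} τ_j = 1/2. -/
open MeasureTheory intervalIntegral

/-- The cardinal B-spline of degree `p`: `B_0` is the indicator of `[-1/2, 1/2]`,
and `B_{p+1}(x) = ∫_{-1/2}^{1/2} B_p(x - t) dt`. -/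
noncomputable def Bspline : ℕ → ℝ → ℝ
  | 0, x => if -(1/2 : ℝ) ≤ x ∧ x ≤ 1/2 then 1 else 0
  | p + 1, x => ∫ t in (-(1/2) : ℝ)..(1/2 : ℝ), Bspline p (x - t)

lemma bspline_measurable (p : ℕ) : Measurable (Bspline p) := by
  induction p with
  | zero =>
    simp only [Bspline]
    exact Measurable.ite (by
      exact (measurableSet_Icc (a := -(1/2:ℝ)) (b := 1/2)).congr (by ext x; simp [Set.mem_Icc])
      ) measurable_const measurable_const
  | succ p ih =>
    have : (fun x => Bspline (p+1) x) = fun x =>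
        ∫ t in Set.Ioc (-(1/2):ℝ) (1/2), Bspline p (x - t) := by
      ext x
      rw [show Bspline (p+1) x = ∫ t in (-(1/2):ℝ)..(1/2:ℝ), Bspline p (x - t) from rfl,
        intervalIntegral.integral_of_le (by norm_num)]
    rw [show Bspline (p+1) = fun x => Bspline (p+1) x from rfl, this]
    have hsm : StronglyMeasurable (Function.uncurry fun (x t : ℝ) => Bspline p (x - t)) :=
      (ih.comp (measurable_fst.sub measurable_snd)).stronglyMeasurable
    exact (hsm.integral_prod_right (ν := volume.restrict (Set.Ioc (-(1/2):ℝ) (1/2)))).measurable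


lemma bspline_integrableOn (p : ℕ) (h : ∀ x, |Bspline p x| ≤ 1) (s : Set ℝ)
    (hs : MeasurableSet s) (hfin : volume s < ⊤) : IntegrableOn (Bspline p) s := by
  refine Integrable.mono' (g := fun _ => (1:ℝ)) ((integrableOn_const_iff (C := (1:ℝ))).2 (Or.inr hfin)) ((bspline_measurable p).aestronglyMeasurable) ?_
  exact Filter.Eventually.of_forall fun x => by simpa using h x

lemma bspline_comp_sub_intervalIntegrable (p : ℕ) (h : ∀ x, |Bspline p x| ≤ 1) (x a b : ℝ) :
    IntervalIntegrable (fun t => Bspline p (x - t)) volume a b := by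
  rw [intervalIntegrable_iff]
  refine Integrable.mono' (g := fun _ => (1:ℝ)) ((integrableOn_const_iff (C := (1:ℝ))).2 (Or.inr (by
      simp only [Set.uIoc, Real.volume_Ioc]; exact ENNReal.ofReal_lt_top)))
    (((bspline_measurable p).comp (measurable_const.sub measurable_id)).aestronglyMeasurable) ?_
  exact Filter.Eventually.of_forall fun t => by simpa using h (x - t)

lemma bspline_bounds (p : ℕ) (x : ℝ) : 0 ≤ Bspline p x ∧ Bspline p x ≤ 1 := by
  induction p generalizing x with
  | zero => simp only [Bspline]; split <;> norm_num
  | succ p ih =>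
    have habs : ∀ y, |Bspline p y| ≤ 1 := fun y => abs_le.2 ⟨by linarith [(ih y).1], (ih y).2⟩
    constructor
    · exact intervalIntegral.integral_nonneg (by norm_num) fun t _ => (ih (x - t)).1
    · calc Bspline (p+1) x = ∫ t in (-(1/2):ℝ)..(1/2:ℝ), Bspline p (x - t) := rfl
        _ ≤ ∫ _t in (-(1/2):ℝ)..(1/2:ℝ), (1:ℝ) := by
            apply intervalIntegral.integral_mono_on (by norm_num)
              (bspline_comp_sub_intervalIntegrable p habs x _ _) intervalIntegrable_const
            exact fun t _ => (ih (x - t)).2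
        _ = 1 := by norm_num

lemma bspline_abs_le (p : ℕ) (x : ℝ) : |Bspline p x| ≤ 1 :=
  abs_le.2 ⟨by linarith [(bspline_bounds p x).1], (bspline_bounds p x).2⟩

lemma bspline_intervalIntegrable (p : ℕ) (a b : ℝ) :
    IntervalIntegrable (Bspline p) volume a b := by
  rw [intervalIntegrable_iff]
  exact bspline_integrableOn p (bspline_abs_le p) _ measurableSet_uIoc (by
    simp only [Set.uIoc, Real.volume_Ioc]; exact ENNReal.ofReal_lt_top)

lemma bspline_support (p : ℕ) (x : ℝ) (hx : (p + 1 : ℝ) / 2 < |x|) : Bspline p x = 0 := by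
  induction p generalizing x with
  | zero =>
    simp only [Bspline]
    rw [if_neg]
    rintro ⟨h1, h2⟩
    have hle : |x| ≤ 1/2 := abs_le.2 ⟨h1, h2⟩
    norm_num at hx; linarith
  | succ p ih =>
    show (∫ t in (-(1/2):ℝ)..(1/2:ℝ), Bspline p (x - t)) = 0
    rw [intervalIntegral.integral_congr (g := fun _ => (0:ℝ)), intervalIntegral.integral_zero]
    intro t ht
    rw [Set.uIcc_of_le (by norm_num), Set.mem_Icc] at ht
    apply ih
    push_cast
    rcases abs_cases (x - t) with ⟨he, _⟩ | ⟨he, _⟩ <;> rcases abs_cases x with ⟨h2, _⟩ | ⟨h2, _⟩ <;>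
      rw [he] <;> push_cast at hx ⊢ <;> nlinarith [ht.1, ht.2]

lemma bspline_even (p : ℕ) (x : ℝ) : Bspline p (-x) = Bspline p x := by
  induction p generalizing x with
  | zero =>
    simp only [Bspline]
    congr 1
    exact propext ⟨fun ⟨h1, h2⟩ => ⟨by linarith, by linarith⟩,
      fun ⟨h1, h2⟩ => ⟨by linarith, by linarith⟩⟩
  | succ p ih =>
    show (∫ t in (-(1/2):ℝ)..(1/2:ℝ), Bspline p (-x - t))
        = ∫ t in (-(1/2):ℝ)..(1/2:ℝ), Bspline p (x - t)
    have h1 : ∀ t : ℝ, Bspline p (-x - t) = Bspline p (x + t) := fun t => by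
      rw [show -x - t = -(x + t) by ring, ih]
    simp_rw [h1]
    have := intervalIntegral.integral_comp_neg (a := (-(1/2):ℝ)) (b := (1/2:ℝ))
      (fun t => Bspline p (x - t))
    simp only [sub_neg_eq_add, neg_neg] at this
    rw [← this]

lemma bspline_succ_eq (p : ℕ) (x : ℝ) :
    Bspline (p + 1) x = ∫ s in (x - 1/2)..(x + 1/2), Bspline p s := by
  show (∫ t in (-(1/2):ℝ)..(1/2:ℝ), Bspline p (x - t)) = _
  rw [intervalIntegral.integral_comp_sub_left (Bspline p) x]
  norm_num

lemma bspline_integral_one : ∀ (p : ℕ) (a b : ℝ), a ≤ -((p:ℝ)+1)/2 → ((p:ℝ)+1)/2 ≤ b →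
    (∫ x in a..b, Bspline p x) = 1 := by
  intro p
  induction p with
  | zero =>
    intro a b ha hb
    norm_num at ha hb
    have h1 : (∫ x in a..(-(1/2):ℝ), Bspline 0 x) = 0 := by
      rw [intervalIntegral.integral_of_le (by linarith),
        MeasureTheory.integral_Ioc_eq_integral_Ioo]
      rw [MeasureTheory.setIntegral_congr_fun measurableSet_Ioo
        (g := fun _ => (0:ℝ)) (fun x hx => by
          simp only [Bspline]; rw [if_neg]; rintro ⟨u1, u2⟩; exact absurd hx.2 (by linarith))]
      simp
    have h2 : (∫ x in (-(1/2):ℝ)..(1/2:ℝ), Bspline 0 x) = 1 := by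
      rw [intervalIntegral.integral_of_le (by norm_num),
        MeasureTheory.integral_Ioc_eq_integral_Ioo]
      rw [MeasureTheory.setIntegral_congr_fun measurableSet_Ioo
        (g := fun _ => (1:ℝ)) (fun x hx => by
          simp only [Bspline]; rw [if_pos ⟨le_of_lt hx.1, le_of_lt hx.2⟩])]
      simp [Real.volume_Ioo]
      norm_num
    have h3 : (∫ x in (1/2:ℝ)..b, Bspline 0 x) = 0 := by
      rw [intervalIntegral.integral_of_le (by linarith),
        MeasureTheory.integral_Ioc_eq_integral_Ioo]
      rw [MeasureTheory.setIntegral_congr_fun measurableSet_Ioo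
        (g := fun _ => (0:ℝ)) (fun x hx => by
          simp only [Bspline]; rw [if_neg]; rintro ⟨u1, u2⟩; exact absurd hx.1 (by linarith))]
      simp
    have e1 : (∫ x in a..(-(1/2):ℝ), Bspline 0 x) + (∫ x in (-(1/2):ℝ)..(1/2:ℝ), Bspline 0 x)
        = ∫ x in a..(1/2:ℝ), Bspline 0 x :=
      intervalIntegral.integral_add_adjacent_intervals
        (bspline_intervalIntegrable 0 _ _) (bspline_intervalIntegrable 0 _ _)
    have e2 : (∫ x in a..(1/2:ℝ), Bspline 0 x) + (∫ x in (1/2:ℝ)..b, Bspline 0 x)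
        = ∫ x in a..b, Bspline 0 x :=
      intervalIntegral.integral_add_adjacent_intervals
        (bspline_intervalIntegrable 0 _ _) (bspline_intervalIntegrable 0 _ _)
    linarith
  | succ p ih =>
    intro a b ha hb
    push_cast at ha hb
    set F : ℝ → ℝ := fun y => ∫ s in (a - 1/2)..y, Bspline p s with hF
    have hFcont : Continuous F :=
      intervalIntegral.continuous_primitive (fun u v => bspline_intervalIntegrable p u v) _
    have hBF : ∀ x : ℝ, Bspline (p+1) x = F (x + 1/2) - F (x - 1/2) := by
      intro x
      rw [bspline_succ_eq, hF]
      rw [intervalIntegral.integral_interval_sub_left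
        (bspline_intervalIntegrable p _ _) (bspline_intervalIntegrable p _ _)]
    have hsplit : (∫ x in a..b, Bspline (p+1) x)
        = (∫ x in a..b, F (x + 1/2)) - ∫ x in a..b, F (x - 1/2) := by
      have c1 : Continuous fun x : ℝ => F (x + 1/2) := by fun_prop
      have c2 : Continuous fun x : ℝ => F (x - 1/2) := by fun_prop
      rw [← intervalIntegral.integral_sub (c1.intervalIntegrable _ _)
        (c2.intervalIntegrable _ _)]
      exact intervalIntegral.integral_congr fun x _ => hBF x
    rw [hsplit, intervalIntegral.integral_comp_add_right F (1/2),
      intervalIntegral.integral_comp_sub_right F (1/2)]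
    have hp : (0:ℝ) ≤ (p:ℝ) := Nat.cast_nonneg p
    have hab : a + 1/2 ≤ b - 1/2 := by linarith
    have hFint : ∀ u v : ℝ, IntervalIntegrable F volume u v :=
      fun u v => hFcont.intervalIntegrable u v
    rw [← intervalIntegral.integral_add_adjacent_intervals (a := a + 1/2) (b := b - 1/2)
        (c := b + 1/2) (hFint _ _) (hFint _ _),
      ← intervalIntegral.integral_add_adjacent_intervals (a := a - 1/2) (b := a + 1/2)
        (c := b - 1/2) (hFint _ _) (hFint _ _)]
    have hFone : (∫ y in (b - 1/2)..(b + 1/2), F y) = 1 := by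
      rw [intervalIntegral.integral_congr (g := fun _ => (1:ℝ)) (fun y hy => by
        rw [Set.uIcc_of_le (by linarith), Set.mem_Icc] at hy
        exact ih (a - 1/2) y (by linarith) (by linarith [hy.1]))]
      simp
      norm_num
    have hFzero : (∫ y in (a - 1/2)..(a + 1/2), F y) = 0 := by
      rw [intervalIntegral.integral_congr (g := fun _ => (0:ℝ)) (fun y hy => by
        rw [Set.uIcc_of_le (by linarith), Set.mem_Icc] at hy
        show (∫ s in (a - 1/2)..y, Bspline p s) = 0
        rw [intervalIntegral.integral_of_le (by linarith [hy.1]),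
          MeasureTheory.integral_Ioc_eq_integral_Ioo]
        rw [MeasureTheory.setIntegral_congr_fun measurableSet_Ioo
          (g := fun _ => (0:ℝ)) (fun x hx => by
            apply bspline_support
            rw [abs_of_nonpos (by push_cast; linarith [hx.2, hy.2])]
            push_cast
            linarith [hx.2, hy.2])]
        simp)]
      simp
    rw [hFone, hFzero]
    ring

lemma bspline_halfint (p : ℕ) (k : ℝ) :
    Bspline (p + 1) (k + 1/2) = ∫ s in k..(k+1), Bspline p s := by
  rw [bspline_succ_eq, show k + 1/2 - 1/2 = k by ring, show k + 1/2 + 1/2 = k + 1 by ring]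

lemma bspline_halfint_sum (p : ℕ) (lo : ℝ) (n : ℕ) :
    (∑ i ∈ Finset.range n, Bspline (p + 1) (lo + i + 1/2))
      = ∫ s in lo..(lo + n), Bspline p s := by
  have := intervalIntegral.sum_integral_adjacent_intervals (f := Bspline p) (μ := volume)
    (a := fun k : ℕ => lo + k) (n := n) (fun k _ => bspline_intervalIntegrable p _ _)
  simp only [Nat.cast_zero, add_zero] at this
  rw [← this]
  refine Finset.sum_congr rfl fun i _ => ?_
  rw [bspline_halfint]
  congr 1
  push_cast; ring

lemma bspline_icc_sum (p q : ℕ) (hq : q = p / 2) (r : ℤ) (hr : |r| ≤ (q:ℤ)) :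
    (∑ j ∈ Finset.Icc (-(2 * (q:ℤ))) (2 * (q:ℤ) + 1),
      Bspline (p + 1) ((r : ℝ) - (j : ℝ) + 1/2)) = 1 := by
  have habs := abs_le.1 hr
  set lo : ℝ := (r : ℝ) - 2*q - 1 with hlo
  have hmap : (∑ i ∈ Finset.range (4*q + 2), Bspline (p + 1) (lo + i + 1/2))
      = ∑ j ∈ Finset.Icc (-(2 * (q:ℤ))) (2 * (q:ℤ) + 1),
        Bspline (p + 1) ((r : ℝ) - (j : ℝ) + 1/2) := by
    refine Finset.sum_nbij' (i := fun i : ℕ => 2*(q:ℤ) + 1 - (i:ℤ))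
      (j := fun j : ℤ => (2*(q:ℤ) + 1 - j).toNat) ?_ ?_ ?_ ?_ ?_
    · intro i hi; simp only [Finset.mem_range] at hi; simp only [Finset.mem_Icc]; omega
    · intro j hj; simp only [Finset.mem_Icc] at hj; simp only [Finset.mem_range]; omega
    · intro i hi; simp only [Finset.mem_range] at hi; omega
    · intro j hj; simp only [Finset.mem_Icc] at hj; omega
    · intro i hi
      simp only [Finset.mem_range] at hi
      congr 1
      rw [hlo]
      push_cast
      ring
  rw [← hmap, bspline_halfint_sum]
  have hple : (p:ℤ) ≤ 2*(q:ℤ) + 1 := by omega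
  have hple' : (p:ℝ) ≤ 2*(q:ℝ) + 1 := by exact_mod_cast hple
  have h1 : (-(q:ℤ) : ℝ) ≤ (r:ℝ) := by exact_mod_cast habs.1
  have h2 : ((r:ℤ) : ℝ) ≤ (q:ℝ) := by exact_mod_cast habs.2
  apply bspline_integral_one
  · rw [hlo]; push_cast at h1 h2 ⊢; linarith
  · rw [hlo]; push_cast at h1 h2 ⊢; linarith

/-- If the symmetric coefficients `c` are supported on `|r| ≤ ⌊p/2⌋` and sum to `1`,
then the B-integration terms satisfy `∑_{j=-2⌊p/2⌋}^{0} τ_j = 1/2`. -/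
theorem tau_half_sum (p : ℕ) (q : ℕ) (hq : q = p / 2)
    (c : ℤ → ℝ) (hsymm : ∀ r : ℤ, c (-r) = c r)
    (hsupp : ∀ r : ℤ, (q : ℤ) < |r| → c r = 0)
    (hsum : ∑' r : ℤ, c r = 1)
    (τ : ℤ → ℝ)
    (hτ : ∀ j : ℤ, τ j = ∑' r : ℤ, c r * Bspline (p + 1) ((r : ℝ) - (j : ℝ) + 1/2)) :
    (∑ j ∈ Finset.Icc (-(2 * (q : ℤ))) 0, τ j) = 1/2 := by
  set S : Finset ℤ := Finset.Icc (-(q:ℤ)) (q:ℤ) with hS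
  have hout : ∀ r : ℤ, r ∉ S → c r = 0 := by
    intro r hr
    apply hsupp
    simp only [hS, Finset.mem_Icc] at hr
    rw [lt_abs]
    omega
  have hcsum : (∑ r ∈ S, c r) = 1 := by rw [← tsum_eq_sum (L := SummationFilter.unconditional ℤ) hout]; exact hsum
  have hτS : ∀ j : ℤ, τ j = ∑ r ∈ S, c r * Bspline (p + 1) ((r : ℝ) - (j : ℝ) + 1/2) := by
    intro j
    rw [hτ j, tsum_eq_sum (s := S) (fun r hr => by rw [hout r hr, zero_mul])]
  -- symmetry τ j = τ (1 - j)
  have hτsymm : ∀ j : ℤ, τ (1 - j) = τ j := by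
    intro j
    rw [hτS, hτS]
    refine Finset.sum_nbij' (i := fun r => -r) (j := fun r => -r) ?_ ?_ ?_ ?_ ?_
    · intro r hr; simp only [hS, Finset.mem_Icc] at hr ⊢; omega
    · intro r hr; simp only [hS, Finset.mem_Icc] at hr ⊢; omega
    · intro r _; ring
    · intro r _; ring
    · intro r _
      rw [hsymm]
      congr 1
      rw [← bspline_even]
      congr 1
      push_cast
      ring
  -- total sum over the full window is 1
  have htotal : (∑ j ∈ Finset.Icc (-(2 * (q:ℤ))) (2 * (q:ℤ) + 1), τ j) = 1 := by
    calc (∑ j ∈ Finset.Icc (-(2 * (q:ℤ))) (2 * (q:ℤ) + 1), τ j)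
        = ∑ j ∈ Finset.Icc (-(2 * (q:ℤ))) (2 * (q:ℤ) + 1), ∑ r ∈ S,
            c r * Bspline (p + 1) ((r : ℝ) - (j : ℝ) + 1/2) := by
          exact Finset.sum_congr rfl fun j _ => hτS j
      _ = ∑ r ∈ S, ∑ j ∈ Finset.Icc (-(2 * (q:ℤ))) (2 * (q:ℤ) + 1),
            c r * Bspline (p + 1) ((r : ℝ) - (j : ℝ) + 1/2) := Finset.sum_comm
      _ = ∑ r ∈ S, c r * ∑ j ∈ Finset.Icc (-(2 * (q:ℤ))) (2 * (q:ℤ) + 1),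
            Bspline (p + 1) ((r : ℝ) - (j : ℝ) + 1/2) := by
          exact Finset.sum_congr rfl fun r _ => (Finset.mul_sum _ _ _).symm
      _ = ∑ r ∈ S, c r := by
          refine Finset.sum_congr rfl fun r hr => ?_
          rw [bspline_icc_sum p q hq r (abs_le.2 (by simpa [hS, Finset.mem_Icc] using hr)), mul_one]
      _ = 1 := hcsum
  -- split the window into two halves exchanged by j ↦ 1 - j
  have hsplit : (∑ j ∈ Finset.Icc (-(2 * (q:ℤ))) 0, τ j)
      + (∑ j ∈ Finset.Icc (1:ℤ) (2 * (q:ℤ) + 1), τ j)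
      = ∑ j ∈ Finset.Icc (-(2 * (q:ℤ))) (2 * (q:ℤ) + 1), τ j := by
    rw [← Finset.sum_union (by
      rw [Finset.disjoint_left]
      intro j hj1 hj2
      simp only [Finset.mem_Icc] at hj1 hj2
      omega)]
    congr 1
    ext j
    simp only [Finset.mem_union, Finset.mem_Icc]
    omega
  have hhalf : (∑ j ∈ Finset.Icc (1:ℤ) (2 * (q:ℤ) + 1), τ j)
      = ∑ j ∈ Finset.Icc (-(2 * (q:ℤ))) 0, τ j := by
    refine Finset.sum_nbij' (i := fun j => 1 - j) (j := fun j => 1 - j) ?_ ?_ ?_ ?_ ?_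
    · intro j hj; simp only [Finset.mem_Icc] at hj ⊢; omega
    · intro j hj; simp only [Finset.mem_Icc] at hj ⊢; omega
    · intro j _; ring
    · intro j _; ring
    · intro j _; exact (hτsymm j).symm
  linarith [htotal, hsplit, hhalf]
end

section
/- Let q ≥ 1 and N ≥ 4q+2 be natural numbers, let τ : ℤ → ℝ satisfy τ_j = τ_{1−j} for all j ∈ ℤ, τ_j = 0 for j < −2q или j > 2q+1, and Σ_{j=−2q}^{2q+1} τ_j = 1, and set ξ_{−i} = Σ_{j=−2q}^{−i} τ_j. Then for every function g : ℤ → ℝ, Σ_{i=0}^{N−1} Σ_{j=−2q}^{2q+1} τ_j · g(i+j) = (1/2)(g(0) + g(N)) + Σ_{i=1}^{N−1} g(i) + Σ_{i=1}^{2q} ξ_{−i} · (g(−i) − g(i) + g(N+i) − g(N−i)). -/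
open Finset

lemma int_sum_Icc_succ_top {a b : ℤ} (h : a ≤ b + 1) (f : ℤ → ℝ) :
    ∑ j ∈ Finset.Icc a (b + 1), f j = (∑ j ∈ Finset.Icc a b, f j) + f (b + 1) := by
  have hins : Finset.Icc a (b + 1) = insert (b + 1) (Finset.Icc a b) := by
    ext x; simp only [Finset.mem_Icc, Finset.mem_insert]; omega
  rw [hins, Finset.sum_insert (by simp [Finset.mem_Icc]), add_comm]

lemma sum_Icc_eq_range (h : ℤ → ℝ) (a : ℤ) (m : ℕ) :
    ∑ j ∈ Finset.Icc a (a + m - 1), h j = ∑ k ∈ Finset.range m, h (a + k) := by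
  induction m with
  | zero => simp
  | succ n ih =>
    have e : a + ((n : ℤ) + 1) - 1 = (a + (n : ℤ) - 1) + 1 := by ring
    rw [show ((n + 1 : ℕ) : ℤ) = (n : ℤ) + 1 by push_cast; ring, e,
      int_sum_Icc_succ_top (by omega) h, ih, Finset.sum_range_succ]
    congr 1
    ring_nf

lemma single_rule (q : ℕ) (hq : 1 ≤ q) (τ : ℤ → ℝ)
    (hsymm : ∀ j : ℤ, τ j = τ (1 - j))
    (hsum : (∑ j ∈ Finset.Icc (-(2 * (q : ℤ))) (2 * (q : ℤ) + 1), τ j) = 1)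
    (ξ : ℤ → ℝ)
    (hξ : ∀ i : ℤ, ξ (-i) = ∑ j ∈ Finset.Icc (-(2 * (q : ℤ))) (-i), τ j)
    (f : ℤ → ℝ) :
    ∑ j ∈ Finset.Icc (-(2 * (q : ℤ))) (2 * (q : ℤ) + 1), τ j * f j
      = (1/2) * (f 0 + f 1) +
        ∑ i ∈ Finset.Icc (1 : ℤ) (2 * (q : ℤ)),
          ξ (-i) * (f (-i) - f i + f (1 + i) - f (1 - i)) := by
  set S : ℤ → ℝ := fun m => ∑ j ∈ Finset.Icc (-(2 * (q : ℤ))) m, τ j with hSdef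
  have hxiS : ∀ i : ℤ, ξ (-i) = S (-i) := fun i => hξ i
  have hSbot : S (-(2 * (q : ℤ)) - 1) = 0 := by
    simp only [hSdef]
    rw [Finset.Icc_eq_empty (by omega)]; simp
  have hstep : ∀ m : ℤ, -(2 * (q : ℤ)) ≤ m + 1 → S (m + 1) = S m + τ (m + 1) :=
    fun m hm => int_sum_Icc_succ_top hm τ
  have hStop : S (2 * (q : ℤ) + 1) = 1 := hsum
  have hrefl : ∀ m : ℤ, -(2 * (q : ℤ)) - 1 ≤ m → m ≤ 2 * (q : ℤ) + 1 → S m + S (-m) = 1 := by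
    intro m h1 h2
    have hre : S (-m) = ∑ k ∈ Finset.Icc (m + 1) (2 * (q : ℤ) + 1), τ k := by
      simp only [hSdef]
      exact Finset.sum_nbij' (fun j => 1 - j) (fun k => 1 - k)
        (by intro a ha; simp only [Finset.mem_Icc] at *; omega)
        (by intro a ha; simp only [Finset.mem_Icc] at *; omega)
        (by intro a _; ring) (by intro a _; ring)
        (by intro a _; exact hsymm a)
    have hu : Finset.Icc (-(2 * (q : ℤ))) m ∪ Finset.Icc (m + 1) (2 * (q : ℤ) + 1)
        = Finset.Icc (-(2 * (q : ℤ))) (2 * (q : ℤ) + 1) := by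
      ext x; simp only [Finset.mem_union, Finset.mem_Icc]; omega
    have hd : Disjoint (Finset.Icc (-(2 * (q : ℤ))) m)
        (Finset.Icc (m + 1) (2 * (q : ℤ) + 1)) := by
      rw [Finset.disjoint_left]
      intro x hx hx'
      simp only [Finset.mem_Icc] at hx hx'; omega
    rw [hre]
    simp only [hSdef]
    rw [← hsum, ← hu, Finset.sum_union hd]
  have hS0 : S 0 = 1/2 := by
    have := hrefl 0 (by omega) (by omega)
    rw [neg_zero] at this; linarith
  -- convert LHS to a range sum
  have hL : ∑ j ∈ Finset.Icc (-(2 * (q : ℤ))) (2 * (q : ℤ) + 1), τ j * f j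
      = ∑ k ∈ Finset.range (4 * q + 2),
          τ (-(2 * (q : ℤ)) + k) * f (-(2 * (q : ℤ)) + k) := by
    rw [show (2 * (q : ℤ) + 1) = -(2 * (q : ℤ)) + ((4 * q + 2 : ℕ) : ℤ) - 1 by
      push_cast; ring]
    exact sum_Icc_eq_range (fun j => τ j * f j) _ _
  set T : ℕ → ℝ := fun k => S ((k : ℤ) - 2 * q - 1) with hT
  set u : ℕ → ℝ := fun k => f ((k : ℤ) - 2 * q) with hu
  set v : ℕ → ℝ := fun k =>
    S ((k : ℤ) - 2 * q) * (f ((k : ℤ) - 2 * q + 1) - f ((k : ℤ) - 2 * q)) with hv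
  have hterm : ∀ k ∈ Finset.range (4 * q + 2),
      τ (-(2 * (q : ℤ)) + k) * f (-(2 * (q : ℤ)) + k)
        = (T (k + 1) * u (k + 1) - T k * u k) - v k := by
    intro k _
    simp only [hT, hu, hv]
    have h1 := hstep ((k : ℤ) - 2 * q - 1) (by omega)
    rw [show (k : ℤ) - 2 * q - 1 + 1 = (k : ℤ) - 2 * q by ring] at h1
    rw [show ((k + 1 : ℕ) : ℤ) - 2 * (q : ℤ) - 1 = (k : ℤ) - 2 * q by push_cast; ring]
    rw [show -(2 * (q : ℤ)) + (k : ℤ) = (k : ℤ) - 2 * q by ring]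
    rw [h1]
    rw [show ((k + 1 : ℕ) : ℤ) - 2 * (q : ℤ) = (k : ℤ) - 2 * q + 1 by push_cast; ring]
    ring
  rw [hL, Finset.sum_congr rfl hterm, Finset.sum_sub_distrib,
    Finset.sum_range_sub (fun k => T k * u k)]
  have hT0 : T 0 = 0 := by
    simp only [hT]
    rw [show ((0 : ℕ) : ℤ) - 2 * (q : ℤ) - 1 = -(2 * (q : ℤ)) - 1 by push_cast; ring]
    exact hSbot
  have hTtop : T (4 * q + 2) = 1 := by
    simp only [hT]
    rw [show ((4 * q + 2 : ℕ) : ℤ) - 2 * (q : ℤ) - 1 = 2 * (q : ℤ) + 1 by push_cast; ring]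
    exact hStop
  have hutop : u (4 * q + 2) = f (2 * (q : ℤ) + 2) := by
    simp only [hu]
    rw [show ((4 * q + 2 : ℕ) : ℤ) - 2 * (q : ℤ) = 2 * (q : ℤ) + 2 by push_cast; ring]
  -- split the v-sum
  have hsplit : ∑ k ∈ Finset.range (4 * q + 2), v k
      = (∑ k ∈ Finset.range (2 * q), v k)
        + ((∑ k ∈ Finset.range (2 * q), v (2 * q + (k + 1))) + v (2 * q + 0))
        + v (4 * q + 1) := by
    rw [show 4 * q + 2 = (4 * q + 1) + 1 by omega, Finset.sum_range_succ,
      show 4 * q + 1 = 2 * q + (2 * q + 1) by omega, Finset.sum_range_add,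
      Finset.sum_range_succ' (fun k => v (2 * q + k)) (2 * q)]
  have hv0 : v (2 * q + 0) = 1/2 * (f 1 - f 0) := by
    simp only [hv]
    rw [show ((2 * q + 0 : ℕ) : ℤ) - 2 * (q : ℤ) = 0 by push_cast; ring, hS0]
    norm_num
  have hvtop : v (4 * q + 1) = f (2 * (q : ℤ) + 2) - f (2 * (q : ℤ) + 1) := by
    simp only [hv]
    rw [show ((4 * q + 1 : ℕ) : ℤ) - 2 * (q : ℤ) = 2 * (q : ℤ) + 1 by push_cast; ring, hStop]
    rw [show 2 * (q : ℤ) + 1 + 1 = 2 * (q : ℤ) + 2 by ring]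
    ring
  have hA : ∑ k ∈ Finset.range (2 * q), v k
      = ∑ k ∈ Finset.range (2 * q),
          ξ (-(1 + (k : ℤ))) * (f (-(k : ℤ)) - f (-(1 + (k : ℤ)))) := by
    rw [← Finset.sum_range_reflect]
    apply Finset.sum_congr rfl
    intro k hk
    have hk' : k < 2 * q := Finset.mem_range.mp hk
    simp only [hv]
    rw [show ((2 * q - 1 - k : ℕ) : ℤ) - 2 * (q : ℤ) = -(1 + (k : ℤ)) by omega]
    rw [show -(1 + (k : ℤ)) + 1 = -(k : ℤ) by ring]
    rw [← hxiS (1 + (k : ℤ))]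
  have hB : ∑ k ∈ Finset.range (2 * q), v (2 * q + (k + 1))
      = (f (2 * (q : ℤ) + 1) - f 1)
        - ∑ k ∈ Finset.range (2 * q),
            ξ (-(1 + (k : ℤ))) * (f (1 + (k : ℤ) + 1) - f (1 + (k : ℤ))) := by
    have hpt : ∀ k ∈ Finset.range (2 * q), v (2 * q + (k + 1))
        = (f (1 + (k : ℤ) + 1) - f (1 + (k : ℤ)))
          - ξ (-(1 + (k : ℤ))) * (f (1 + (k : ℤ) + 1) - f (1 + (k : ℤ))) := by
      intro k hk
      have hk' : k < 2 * q := Finset.mem_range.mp hk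
      simp only [hv]
      rw [show ((2 * q + (k + 1) : ℕ) : ℤ) - 2 * (q : ℤ) = 1 + (k : ℤ) by push_cast; ring]
      have h1 := hrefl (1 + (k : ℤ)) (by omega) (by omega)
      rw [← hxiS (1 + (k : ℤ))] at h1
      have h2 : S (1 + (k : ℤ)) = 1 - ξ (-(1 + (k : ℤ))) := by linarith
      rw [h2]; ring
    rw [Finset.sum_congr rfl hpt, Finset.sum_sub_distrib]
    congr 1
    have := Finset.sum_range_sub (fun k => f (1 + (k : ℤ))) (2 * q)
    rw [Finset.sum_congr rfl (fun k _ => by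
      rw [show (1 : ℤ) + (k : ℤ) + 1 = 1 + ((k + 1 : ℕ) : ℤ) by push_cast; ring] : ∀ k ∈ Finset.range (2 * q),
        f (1 + (k : ℤ) + 1) - f (1 + (k : ℤ))
          = f (1 + ((k + 1 : ℕ) : ℤ)) - f (1 + (k : ℤ))), this]
    rw [show (1 : ℤ) + ((2 * q : ℕ) : ℤ) = 2 * (q : ℤ) + 1 by push_cast; ring]
    norm_num
  -- convert RHS boundary sum to a range sum
  have hR : ∑ i ∈ Finset.Icc (1 : ℤ) (2 * (q : ℤ)),
        ξ (-i) * (f (-i) - f i + f (1 + i) - f (1 - i))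
      = ∑ k ∈ Finset.range (2 * q),
          ξ (-(1 + (k : ℤ))) * (f (-(1 + (k : ℤ))) - f (1 + (k : ℤ))
            + f (1 + (1 + (k : ℤ))) - f (1 - (1 + (k : ℤ)))) := by
    rw [show (2 * (q : ℤ)) = 1 + ((2 * q : ℕ) : ℤ) - 1 by push_cast; ring]
    exact sum_Icc_eq_range (fun i => ξ (-i) * (f (-i) - f i + f (1 + i) - f (1 - i))) 1 (2 * q)
  have hRBA : ∑ k ∈ Finset.range (2 * q),
        ξ (-(1 + (k : ℤ))) * (f (-(1 + (k : ℤ))) - f (1 + (k : ℤ))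
          + f (1 + (1 + (k : ℤ))) - f (1 - (1 + (k : ℤ))))
      = (∑ k ∈ Finset.range (2 * q),
          ξ (-(1 + (k : ℤ))) * (f (1 + (k : ℤ) + 1) - f (1 + (k : ℤ))))
        - ∑ k ∈ Finset.range (2 * q),
            ξ (-(1 + (k : ℤ))) * (f (-(k : ℤ)) - f (-(1 + (k : ℤ)))) := by
    rw [← Finset.sum_sub_distrib]
    apply Finset.sum_congr rfl
    intro k _
    rw [show (1 : ℤ) + (1 + (k : ℤ)) = 1 + (k : ℤ) + 1 by ring,
      show (1 : ℤ) - (1 + (k : ℤ)) = -(k : ℤ) by ring]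
    ring
  rw [hsplit, hT0, hTtop, hutop, hv0, hvtop, hA, hB, hR, hRBA]
  ring

/-- The algebraic identity behind the composite B-spline integration rule:
applying the single-interval rule with weights `τ_j` on each of the `N`
subintervals and regrouping yields the composite trapezoidal rule plus boundary
corrections with coefficients `ξ_{-i}`. -/
theorem composite_rule_identity (q N : ℕ) (hq : 1 ≤ q) (hN : 4 * q + 2 ≤ N)
    (τ : ℤ → ℝ)
    (hsymm : ∀ j : ℤ, τ j = τ (1 - j))
    (hsupp : ∀ j : ℤ, (j < -(2 * (q : ℤ)) ∨ 2 * (q : ℤ) + 1 < j) → τ j = 0)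
    (hsum : (∑ j ∈ Finset.Icc (-(2 * (q : ℤ))) (2 * (q : ℤ) + 1), τ j) = 1)
    (ξ : ℤ → ℝ)
    (hξ : ∀ i : ℤ, ξ (-i) = ∑ j ∈ Finset.Icc (-(2 * (q : ℤ))) (-i), τ j) :
    ∀ g : ℤ → ℝ,
      (∑ i ∈ Finset.range N, ∑ j ∈ Finset.Icc (-(2 * (q : ℤ))) (2 * (q : ℤ) + 1),
          τ j * g ((i : ℤ) + j)) =
        (1/2) * (g 0 + g (N : ℤ)) + (∑ i ∈ Finset.Icc (1 : ℤ) ((N : ℤ) - 1), g i) +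
          ∑ i ∈ Finset.Icc (1 : ℤ) (2 * (q : ℤ)),
            ξ (-i) * (g (-i) - g i + g ((N : ℤ) + i) - g ((N : ℤ) - i)) := by
  intro g
  obtain ⟨M, rfl⟩ : ∃ M, N = M + 1 := ⟨N - 1, by omega⟩
  have hinner : ∀ i ∈ Finset.range (M + 1),
      (∑ j ∈ Finset.Icc (-(2 * (q : ℤ))) (2 * (q : ℤ) + 1), τ j * g ((i : ℤ) + j))
        = (1/2) * (g ((i : ℤ) + 0) + g ((i : ℤ) + 1)) +
          ∑ m ∈ Finset.Icc (1 : ℤ) (2 * (q : ℤ)),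
            ξ (-m) * (g ((i : ℤ) + -m) - g ((i : ℤ) + m)
              + g ((i : ℤ) + (1 + m)) - g ((i : ℤ) + (1 - m))) :=
    fun i _ => single_rule q hq τ hsymm hsum ξ hξ (fun j => g ((i : ℤ) + j))
  rw [Finset.sum_congr rfl hinner, Finset.sum_add_distrib]
  -- trapezoidal part
  have hP1 : ∑ i ∈ Finset.range (M + 1), (1/2) * (g ((i : ℤ) + 0) + g ((i : ℤ) + 1))
      = (1/2) * (g 0 + g ((M + 1 : ℕ) : ℤ))
        + ∑ i ∈ Finset.Icc (1 : ℤ) (((M + 1 : ℕ) : ℤ) - 1), g i := by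
    have hpt : ∀ i ∈ Finset.range (M + 1),
        (1/2) * (g ((i : ℤ) + 0) + g ((i : ℤ) + 1))
          = g ((i : ℤ)) + (1/2) * (g (((i + 1 : ℕ) : ℤ)) - g ((i : ℤ))) := by
      intro i _
      rw [show ((i : ℤ) + 0) = (i : ℤ) by ring,
        show (((i + 1 : ℕ)) : ℤ) = (i : ℤ) + 1 by push_cast; ring]
      ring
    rw [Finset.sum_congr rfl hpt, Finset.sum_add_distrib, ← Finset.mul_sum,
      Finset.sum_range_sub (fun i => g ((i : ℤ))),
      Finset.sum_range_succ' (fun i => g ((i : ℤ))) M]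
    have hIcc : ∑ i ∈ Finset.Icc (1 : ℤ) (((M + 1 : ℕ) : ℤ) - 1), g i
        = ∑ i ∈ Finset.range M, g (((i + 1 : ℕ) : ℤ)) := by
      rw [show (((M + 1 : ℕ) : ℤ) - 1) = 1 + ((M : ℕ) : ℤ) - 1 by push_cast; ring]
      rw [sum_Icc_eq_range g 1 M]
      exact Finset.sum_congr rfl fun k _ => by rw [show (1 : ℤ) + (k : ℤ) = ((k + 1 : ℕ) : ℤ) by push_cast; ring]
    rw [hIcc]
    push_cast
    ring
  rw [hP1]
  -- boundary part
  have hP2 : ∑ i ∈ Finset.range (M + 1), ∑ m ∈ Finset.Icc (1 : ℤ) (2 * (q : ℤ)),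
        ξ (-m) * (g ((i : ℤ) + -m) - g ((i : ℤ) + m)
          + g ((i : ℤ) + (1 + m)) - g ((i : ℤ) + (1 - m)))
      = ∑ m ∈ Finset.Icc (1 : ℤ) (2 * (q : ℤ)),
          ξ (-m) * (g (-m) - g m + g (((M + 1 : ℕ) : ℤ) + m) - g (((M + 1 : ℕ) : ℤ) - m)) := by
    rw [Finset.sum_comm]
    apply Finset.sum_congr rfl
    intro m _
    rw [← Finset.mul_sum]
    congr 1
    have hpt : ∀ i ∈ Finset.range (M + 1),
        g ((i : ℤ) + -m) - g ((i : ℤ) + m)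
            + g ((i : ℤ) + (1 + m)) - g ((i : ℤ) + (1 - m))
          = (g (((i + 1 : ℕ) : ℤ) + m) - g ((i : ℤ) + m))
            - (g (((i + 1 : ℕ) : ℤ) - m) - g ((i : ℤ) - m)) := by
      intro i _
      rw [show ((i : ℤ) + -m) = (i : ℤ) - m by ring,
        show (((i + 1 : ℕ)) : ℤ) + m = (i : ℤ) + (1 + m) by push_cast; ring,
        show (((i + 1 : ℕ)) : ℤ) - m = (i : ℤ) + (1 - m) by push_cast; ring]
      ring
    rw [Finset.sum_congr rfl hpt, Finset.sum_sub_distrib,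
      Finset.sum_range_sub (fun i => g ((i : ℤ) + m)),
      Finset.sum_range_sub (fun i => g ((i : ℤ) - m))]
    rw [show ((0 : ℕ) : ℤ) + m = m by push_cast; ring,
      show ((0 : ℕ) : ℤ) - m = -m by push_cast; ring]
    ring
  rw [hP2]
end

section
/- Let h > 0, n ∈ ℤ, and let P : ℝ → ℝ be a polynomial of degree at most 3. Set P_i = P(ih) and let P̄_i = (1/h)·∫_{ih−h/2}^{ih+h/2} P(x) dx denote the cell averages. Then −(1/6)·P̄_{n−1} + (4/3)·P̄_n − (1/6)·P̄_{n+1} = −(1/8)·P_{n−1} + (5/4)·P_n − (1/8)·P_{n+1}. -/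
open MeasureTheory intervalIntegral

lemma eval_expand (P : Polynomial ℝ) (hP : P.degree ≤ 3) (x : ℝ) :
    P.eval x = P.coeff 0 + P.coeff 1 * x + P.coeff 2 * x^2 + P.coeff 3 * x^3 := by
  have hnd' : P.natDegree ≤ 3 := Polynomial.natDegree_le_iff_degree_le.mpr hP
  have hnd : P.natDegree < 4 := by omega
  rw [Polynomial.eval_eq_sum_range' hnd]
  simp [Finset.sum_range_succ]

lemma integral_expand (P : Polynomial ℝ) (hP : P.degree ≤ 3) (a b : ℝ) :
    ∫ x in a..b, P.eval x =
      P.coeff 0 * (b - a) + P.coeff 1 * (b^2 - a^2)/2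
        + P.coeff 2 * (b^3 - a^3)/3 + P.coeff 3 * (b^4 - a^4)/4 := by
  have he : ∀ x, P.eval x = P.coeff 0 + P.coeff 1 * x + P.coeff 2 * x^2 + P.coeff 3 * x^3 :=
    eval_expand P hP
  simp only [he]
  have i0 : IntervalIntegrable (fun _ : ℝ => P.coeff 0) MeasureTheory.volume a b :=
    intervalIntegrable_const
  have i1 : IntervalIntegrable (fun x : ℝ => P.coeff 1 * x) MeasureTheory.volume a b :=
    Continuous.intervalIntegrable (by fun_prop) _ _
  have i2 : IntervalIntegrable (fun x : ℝ => P.coeff 2 * x^2) MeasureTheory.volume a b :=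
    Continuous.intervalIntegrable (by fun_prop) _ _
  have i3 : IntervalIntegrable (fun x : ℝ => P.coeff 3 * x^3) MeasureTheory.volume a b :=
    Continuous.intervalIntegrable (by fun_prop) _ _
  rw [intervalIntegral.integral_add ((i0.add i1).add i2) i3,
      intervalIntegral.integral_add (i0.add i1) i2,
      intervalIntegral.integral_add i0 i1,
      intervalIntegral.integral_const, intervalIntegral.integral_const_mul,
      intervalIntegral.integral_const_mul, intervalIntegral.integral_const_mul,
      integral_id, integral_pow, integral_pow]
  simp only [smul_eq_mul]
  push_cast
  ring

/-- Case `p = 2` of Theorem 1: for a polynomial of degree at most `3`, the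
functional `L_3` applied to cell averages equals `L_2` applied to point values. -/
theorem L3_cellavg_eq_L2_pointval (h : ℝ) (hh : 0 < h) (n : ℤ)
    (P : Polynomial ℝ) (hP : P.degree ≤ 3)
    (Pval : ℤ → ℝ) (hPval : ∀ i : ℤ, Pval i = P.eval ((i : ℝ) * h))
    (Pbar : ℤ → ℝ)
    (hPbar : ∀ i : ℤ, Pbar i =
      (1 / h) * ∫ x in ((i : ℝ) * h - h / 2)..((i : ℝ) * h + h / 2), P.eval x) :
    -(1/6) * Pbar (n - 1) + (4/3) * Pbar n - (1/6) * Pbar (n + 1) =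
      -(1/8) * Pval (n - 1) + (5/4) * Pval n - (1/8) * Pval (n + 1) := by
  rw [hPbar, hPbar, hPbar, hPval, hPval, hPval,
      integral_expand P hP, integral_expand P hP, integral_expand P hP,
      eval_expand P hP, eval_expand P hP, eval_expand P hP]
  push_cast
  field_simp
  ring
end

section
/- Let h > 0, n ∈ ℤ, and let P : ℝ → ℝ be a polynomial of degree at most 5. Set P_i = P(ih) and let P̄_i = (1/h)·∫_{ih−h/2}^{ih+h/2} P(x) dx denote the cell averages. Then (13/240)·(P̄_{n−2} + P̄_{n+2}) − (7/15)·(P̄_{n−1} + P̄_{n+1}) + (73/40)·P̄_n = (47/1152)·(P_{n−2} + P_{n+2}) − (107/288)·(P_{n−1} + P_{n+1}) + (319/192)·P_n. -/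
open MeasureTheory intervalIntegral

lemma integral_eval_deg5 (P : Polynomial ℝ) (hP : P.degree ≤ 5) (a b : ℝ) :
    (∫ x in a..b, P.eval x) =
      ∑ k ∈ Finset.range 6, P.coeff k * ((b ^ (k+1) - a ^ (k+1)) / (k+1)) := by
  have hnd : P.natDegree < 6 :=
    Nat.lt_succ_of_le (Polynomial.natDegree_le_iff_degree_le.2 hP)
  have heval : ∀ x : ℝ, P.eval x = ∑ k ∈ Finset.range 6, P.coeff k * x ^ k := fun x =>
    Polynomial.eval_eq_sum_range' hnd x
  rw [intervalIntegral.integral_congr (g := fun x => ∑ k ∈ Finset.range 6, P.coeff k * x ^ k)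
    (fun x _ => heval x)]
  rw [intervalIntegral.integral_finset_sum
    (fun k _ => (intervalIntegral.intervalIntegrable_pow k).const_mul _)]
  refine Finset.sum_congr rfl fun k _ => ?_
  rw [intervalIntegral.integral_const_mul, integral_pow]

set_option maxHeartbeats 4000000 in
/-- Case `p = 4` of Theorem 1: for a polynomial of degree at most `5`, the
functional `L_5` applied to cell averages equals `L_4` applied to point values. -/
theorem L5_cellavg_eq_L4_pointval (h : ℝ) (hh : 0 < h) (n : ℤ)
    (P : Polynomial ℝ) (hP : P.degree ≤ 5)
    (Pval : ℤ → ℝ) (hPval : ∀ i : ℤ, Pval i = P.eval ((i : ℝ) * h))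
    (Pbar : ℤ → ℝ)
    (hPbar : ∀ i : ℤ, Pbar i =
      (1 / h) * ∫ x in ((i : ℝ) * h - h / 2)..((i : ℝ) * h + h / 2), P.eval x) :
    (13/240) * (Pbar (n - 2) + Pbar (n + 2)) - (7/15) * (Pbar (n - 1) + Pbar (n + 1))
        + (73/40) * Pbar n =
      (47/1152) * (Pval (n - 2) + Pval (n + 2)) - (107/288) * (Pval (n - 1) + Pval (n + 1))
        + (319/192) * Pval n := by
  have hne : h ≠ 0 := hh.ne'
  have hnd : P.natDegree < 6 :=
    Nat.lt_succ_of_le (Polynomial.natDegree_le_iff_degree_le.2 hP)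
  have heval : ∀ x : ℝ, P.eval x = ∑ k ∈ Finset.range 6, P.coeff k * x ^ k := fun x =>
    Polynomial.eval_eq_sum_range' hnd x
  simp only [hPbar, hPval, integral_eval_deg5 P hP]
  simp only [heval]
  simp only [Finset.sum_range_succ, Finset.sum_range_zero]
  push_cast
  field_simp
  ring
end

section
/- Let h > 0 and let P : ℝ → ℝ be a polynomial of degree at most 2. Set P_i = P(ih) and P̄_i = (1/h)·∫_{ih−h/2}^{ih+h/2} P(x) dx. Then for every x ∈ ℝ, Σ_{n∈ℤ} [−(1/6)P̄_{n−1} + (4/3)P̄_n − (1/6)P̄_{n+1}] · B_3(x/h − n) = Σ_{n∈ℤ} [−(1/8)P_{n−1} + (5/4)P_n − (1/8)P_{n+1}] · B_3(x/h − n), where both sums have only finitely many nonzero terms since B_3 is supported in [−2, 2]. -/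
open MeasureTheory intervalIntegral

lemma eval_eq_quad (P : Polynomial ℝ) (hP : P.degree ≤ 2) (x : ℝ) :
    P.eval x = P.coeff 0 + P.coeff 1 * x + P.coeff 2 * x ^ 2 := by
  have h3 : P.natDegree < 3 :=
    lt_of_le_of_lt (Polynomial.natDegree_le_iff_degree_le.mpr hP) (by norm_num)
  rw [Polynomial.eval_eq_sum_range' h3]
  simp [Finset.sum_range_succ]

lemma integral_quad (c b a u v : ℝ) :
    ∫ t in u..v, (c + b * t + a * t ^ 2) =
      c * (v - u) + b * (v ^ 2 - u ^ 2) / 2 + a * (v ^ 3 - u ^ 3) / 3 := by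
  have h1 : IntervalIntegrable (fun t : ℝ => c + b * t) volume u v :=
    (Continuous.intervalIntegrable (by continuity) _ _)
  have h2 : IntervalIntegrable (fun t : ℝ => a * t ^ 2) volume u v :=
    (Continuous.intervalIntegrable (by continuity) _ _)
  have h3 : IntervalIntegrable (fun _ : ℝ => c) volume u v :=
    intervalIntegrable_const
  have h4 : IntervalIntegrable (fun t : ℝ => b * t) volume u v :=
    (Continuous.intervalIntegrable (by continuity) _ _)
  rw [intervalIntegral.integral_add h1 h2, intervalIntegral.integral_add h3 h4,
    intervalIntegral.integral_const, intervalIntegral.integral_const_mul,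
    intervalIntegral.integral_const_mul, integral_id, integral_pow]
  simp only [smul_eq_mul]
  push_cast
  ring

/-- Case `p = 2` of the point-value/cell-average relation (Eq. (7)): the
`B_3`-expansion of the cell-average functional `L_3` of a polynomial of degree
at most `2` coincides with the `B_3`-expansion of the point-value functional `L_2`. -/
theorem cellavg_pointval_relation_p2 (h : ℝ) (hh : 0 < h)
    (P : Polynomial ℝ) (hP : P.degree ≤ 2)
    (Pval : ℤ → ℝ) (hPval : ∀ i : ℤ, Pval i = P.eval ((i : ℝ) * h))
    (Pbar : ℤ → ℝ)
    (hPbar : ∀ i : ℤ, Pbar i =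
      (1 / h) * ∫ t in ((i : ℝ) * h - h / 2)..((i : ℝ) * h + h / 2), P.eval t) :
    ∀ x : ℝ,
      (∑' n : ℤ, (-(1/6) * Pbar (n - 1) + (4/3) * Pbar n - (1/6) * Pbar (n + 1)) *
          Bspline 3 (x / h - (n : ℝ))) =
        ∑' n : ℤ, (-(1/8) * Pval (n - 1) + (5/4) * Pval n - (1/8) * Pval (n + 1)) *
          Bspline 3 (x / h - (n : ℝ)) := by
  intro x
  have hne : h ≠ 0 := ne_of_gt hh
  set a := P.coeff 2
  set b := P.coeff 1
  set c := P.coeff 0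
  have hval : ∀ i : ℤ, Pval i = c + b * ((i : ℝ) * h) + a * ((i : ℝ) * h) ^ 2 := by
    intro i; rw [hPval]; exact eval_eq_quad P hP _
  have hbar : ∀ i : ℤ, Pbar i = c + b * ((i : ℝ) * h) + a * ((i : ℝ) * h) ^ 2 + a * h ^ 2 / 12 := by
    intro i
    rw [hPbar]
    have : (∫ t in ((i : ℝ) * h - h / 2)..((i : ℝ) * h + h / 2), P.eval t) =
        ∫ t in ((i : ℝ) * h - h / 2)..((i : ℝ) * h + h / 2), (c + b * t + a * t ^ 2) :=
      intervalIntegral.integral_congr (fun t _ => eval_eq_quad P hP t)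
    rw [this, integral_quad]
    field_simp
    ring
  refine tsum_congr fun n => ?_
  congr 1
  rw [hval, hval, hval, hbar, hbar, hbar]
  push_cast
  ring
end

section
/- Let h > 0 and let P : ℝ → ℝ be a polynomial of degree at most 2, with P_i = P(ih). Then for every x ∈ ℝ, Σ_{n∈ℤ} [−(1/8)P_{n−1} + (5/4)P_n − (1/8)P_{n+1}] · B_2(x/h − n) = P(x), where the sum has only finitely many nonzero terms since B_2 is supported in [−3/2, 3/2]. -/
open MeasureTheory intervalIntegral

/-- closed form for `B_1` -/
noncomputable def B1cf (x : ℝ) : ℝ := max 0 (1 - |x|)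

/-- closed form for `B_2` -/
noncomputable def B2cf (x : ℝ) : ℝ :=
  if x ≤ -(3/2) then 0 else if x ≤ -(1/2) then (3/2+x)^2/2
  else if x ≤ 1/2 then 3/4 - x^2 else if x ≤ 3/2 then (3/2-x)^2/2 else 0

lemma integral_ite_Icc (a b c d : ℝ) (hab : a ≤ b) :
    (∫ t in a..b, if c ≤ t ∧ t ≤ d then (1:ℝ) else 0)
      = max 0 (min b d - max a c) := by
  have hfun : (fun t => if c ≤ t ∧ t ≤ d then (1:ℝ) else 0)
      = (Set.Icc c d).indicator (fun _ => (1:ℝ)) := by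
    funext t; simp [Set.indicator, Set.mem_Icc]
  rw [show (∫ t in a..b, if c ≤ t ∧ t ≤ d then (1:ℝ) else 0)
      = ∫ t in a..b, (Set.Icc c d).indicator (fun _ => (1:ℝ)) t from by rw [← hfun],
    intervalIntegral.integral_of_le hab,
    MeasureTheory.setIntegral_indicator measurableSet_Icc,
    MeasureTheory.setIntegral_const]
  have hsub1 : Set.Ioo (max a c) (min b d) ⊆ Set.Ioc a b ∩ Set.Icc c d := by
    rintro t ⟨h1, h2⟩
    exact ⟨⟨lt_of_le_of_lt (le_max_left a c) h1, h2.le.trans (min_le_left b d)⟩,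
      (le_max_right a c).trans h1.le, h2.le.trans (min_le_right b d)⟩
  have hsub2 : Set.Ioc a b ∩ Set.Icc c d ⊆ Set.Icc (max a c) (min b d) := by
    rintro t ⟨⟨h1, h2⟩, h3, h4⟩
    exact ⟨max_le h1.le h3, le_min h2 h4⟩
  have hvol : volume (Set.Ioc a b ∩ Set.Icc c d)
      = ENNReal.ofReal (min b d - max a c) := by
    refine le_antisymm ?_ ?_
    · rw [← Real.volume_Icc]; exact measure_mono hsub2
    · rw [← Real.volume_Ioo]; exact measure_mono hsub1
  rw [measureReal_def, hvol, smul_eq_mul, mul_one]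
  rcases le_total (min b d - max a c) 0 with hr | hr
  · rw [ENNReal.ofReal_of_nonpos hr, max_eq_left hr]; simp
  · rw [ENNReal.toReal_ofReal hr, max_eq_right hr]

lemma Bspline1_eq (x : ℝ) : Bspline 1 x = B1cf x := by
  show (∫ t in (-(1/2):ℝ)..(1/2), Bspline 0 (x - t)) = _
  have hpt : ∀ t : ℝ, Bspline 0 (x - t)
      = if x - 1/2 ≤ t ∧ t ≤ x + 1/2 then (1:ℝ) else 0 := by
    intro t
    show (if -(1/2 : ℝ) ≤ x - t ∧ x - t ≤ 1/2 then (1:ℝ) else 0) = _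
    refine if_congr ?_ rfl rfl
    constructor <;> rintro ⟨h1, h2⟩ <;> constructor <;> linarith
  simp only [hpt]
  rw [integral_ite_Icc _ _ _ _ (by norm_num)]
  unfold B1cf
  rcases le_total x 0 with hx | hx
  · have h1 : min (1/2 : ℝ) (x + 1/2) = x + 1/2 := min_eq_right (by linarith)
    have h2 : max (-(1/2) : ℝ) (x - 1/2) = -(1/2) := max_eq_left (by linarith)
    rw [h1, h2, abs_of_nonpos hx]
    congr 1; ring
  · have h1 : min (1/2 : ℝ) (x + 1/2) = 1/2 := min_eq_left (by linarith)
    have h2 : max (-(1/2) : ℝ) (x - 1/2) = x - 1/2 := max_eq_right (by linarith)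
    rw [h1, h2, abs_of_nonneg hx]
    congr 1; ring

lemma B1cf_cont : Continuous B1cf :=
  continuous_const.max (continuous_const.sub continuous_abs)

lemma B1cf_zero {u : ℝ} (hu : 1 ≤ |u|) : B1cf u = 0 := max_eq_left (by linarith)

lemma B1cf_neg {u : ℝ} (h1 : -1 ≤ u) (h2 : u ≤ 0) : B1cf u = 1 + u := by
  rw [B1cf, abs_of_nonpos h2, max_eq_right (by linarith)]; ring

lemma B1cf_pos {u : ℝ} (h1 : 0 ≤ u) (h2 : u ≤ 1) : B1cf u = 1 - u := by
  rw [B1cf, abs_of_nonneg h1, max_eq_right (by linarith)]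

lemma lin_int (a b c d : ℝ) :
    (∫ t in a..b, (c + d * t)) = c * (b - a) + d * (b^2 - a^2) / 2 := by
  have h1 : IntervalIntegrable (fun t : ℝ => d * t) volume a b :=
    (continuous_const.mul continuous_id).intervalIntegrable a b
  rw [intervalIntegral.integral_add intervalIntegrable_const h1,
    intervalIntegral.integral_const, intervalIntegral.integral_const_mul,
    integral_id, smul_eq_mul]
  ring

lemma Bspline2_eq (x : ℝ) : Bspline 2 x = B2cf x := by
  have hB2 : Bspline 2 x = ∫ t in (-(1/2):ℝ)..(1/2), B1cf (x - t) := by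
    show (∫ t in (-(1/2):ℝ)..(1/2), Bspline 1 (x - t)) = _
    simp only [Bspline1_eq]
  rw [hB2]
  have hint : ∀ a b : ℝ, IntervalIntegrable (fun t => B1cf (x - t)) volume a b :=
    fun a b => (B1cf_cont.comp (continuous_const.sub continuous_id)).intervalIntegrable a b
  rcases le_or_gt x (-(3/2)) with hx | hx
  · have e0 : (∫ t in (-(1/2):ℝ)..(1/2), B1cf (x - t))
        = ∫ t in (-(1/2):ℝ)..(1/2), (0:ℝ) := by
      refine intervalIntegral.integral_congr fun t ht => ?_
      rw [Set.uIcc_of_le (by norm_num)] at ht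
      exact B1cf_zero (by rw [abs_of_nonpos (by cases ht; linarith)]; cases ht; linarith)
    rw [e0, intervalIntegral.integral_zero, B2cf, if_pos hx]
  rcases le_or_gt x (-(1/2)) with hx2 | hx2
  · -- -3/2 < x ≤ -1/2 : split at x+1
    rw [← intervalIntegral.integral_add_adjacent_intervals
        (hint (-(1/2)) (x+1)) (hint (x+1) (1/2))]
    have e1 : (∫ t in (-(1/2):ℝ)..(x+1), B1cf (x - t))
        = ∫ t in (-(1/2):ℝ)..(x+1), ((1+x) + (-1) * t) := by
      refine intervalIntegral.integral_congr fun t ht => ?_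
      rw [Set.uIcc_of_le (by linarith)] at ht
      obtain ⟨ht1, ht2⟩ := ht
      rw [B1cf_neg (by linarith) (by linarith)]; ring
    have e2 : (∫ t in (x+1:ℝ)..(1/2), B1cf (x - t))
        = ∫ t in (x+1:ℝ)..(1/2), (0:ℝ) := by
      refine intervalIntegral.integral_congr fun t ht => ?_
      rw [Set.uIcc_of_le (by linarith)] at ht
      obtain ⟨ht1, ht2⟩ := ht
      exact B1cf_zero (by rw [abs_of_nonpos (by linarith)]; linarith)
    rw [e1, e2, lin_int, intervalIntegral.integral_zero, B2cf,
      if_neg (by linarith), if_pos hx2]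
    ring
  rcases le_or_gt x (1/2) with hx3 | hx3
  · -- -1/2 < x ≤ 1/2 : split at x
    rw [← intervalIntegral.integral_add_adjacent_intervals
        (hint (-(1/2)) x) (hint x (1/2))]
    have e1 : (∫ t in (-(1/2):ℝ)..x, B1cf (x - t))
        = ∫ t in (-(1/2):ℝ)..x, ((1-x) + 1 * t) := by
      refine intervalIntegral.integral_congr fun t ht => ?_
      rw [Set.uIcc_of_le (by linarith)] at ht
      obtain ⟨ht1, ht2⟩ := ht
      rw [B1cf_pos (by linarith) (by linarith)]; ring
    have e2 : (∫ t in x..(1/2:ℝ), B1cf (x - t))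
        = ∫ t in x..(1/2:ℝ), ((1+x) + (-1) * t) := by
      refine intervalIntegral.integral_congr fun t ht => ?_
      rw [Set.uIcc_of_le (by linarith)] at ht
      obtain ⟨ht1, ht2⟩ := ht
      rw [B1cf_neg (by linarith) (by linarith)]; ring
    rw [e1, e2, lin_int, lin_int, B2cf, if_neg (by linarith), if_neg (by linarith),
      if_pos hx3]
    ring
  rcases le_or_gt x (3/2) with hx4 | hx4
  · -- 1/2 < x ≤ 3/2 : split at x-1
    rw [← intervalIntegral.integral_add_adjacent_intervals
        (hint (-(1/2)) (x-1)) (hint (x-1) (1/2))]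
    have e1 : (∫ t in (-(1/2):ℝ)..(x-1), B1cf (x - t))
        = ∫ t in (-(1/2):ℝ)..(x-1), (0:ℝ) := by
      refine intervalIntegral.integral_congr fun t ht => ?_
      rw [Set.uIcc_of_le (by linarith)] at ht
      obtain ⟨ht1, ht2⟩ := ht
      exact B1cf_zero (by rw [abs_of_nonneg (by linarith)]; linarith)
    have e2 : (∫ t in (x-1:ℝ)..(1/2), B1cf (x - t))
        = ∫ t in (x-1:ℝ)..(1/2), ((1-x) + 1 * t) := by
      refine intervalIntegral.integral_congr fun t ht => ?_
      rw [Set.uIcc_of_le (by linarith)] at ht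
      obtain ⟨ht1, ht2⟩ := ht
      rw [B1cf_pos (by linarith) (by linarith)]; ring
    rw [e1, e2, lin_int, intervalIntegral.integral_zero, B2cf,
      if_neg (by linarith), if_neg (by linarith), if_neg (by linarith), if_pos hx4]
    ring
  · have e0 : (∫ t in (-(1/2):ℝ)..(1/2), B1cf (x - t))
        = ∫ t in (-(1/2):ℝ)..(1/2), (0:ℝ) := by
      refine intervalIntegral.integral_congr fun t ht => ?_
      rw [Set.uIcc_of_le (by norm_num)] at ht
      obtain ⟨ht1, ht2⟩ := ht
      exact B1cf_zero (by rw [abs_of_nonneg (by linarith)]; linarith)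
    rw [e0, intervalIntegral.integral_zero, B2cf, if_neg (by linarith),
      if_neg (by linarith), if_neg (by linarith), if_neg (by linarith)]

lemma B2cf_zero {t : ℝ} (ht : 3/2 ≤ |t|) : B2cf t = 0 := by
  rw [B2cf]
  split_ifs with h1 h2 h3 h4 <;>
    first
      | rfl
      | (rcases le_abs.mp ht with h | h <;>
          nlinarith [sq_nonneg (3/2 - t), sq_nonneg (3/2 + t)])

lemma B2cf_left {t : ℝ} (h1 : -(3/2) ≤ t) (h2 : t ≤ -(1/2)) :
    B2cf t = (3/2+t)^2/2 := by
  rw [B2cf]; split_ifs with g1 g2 <;> nlinarith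

lemma B2cf_mid {t : ℝ} (h1 : -(1/2) ≤ t) (h2 : t ≤ 1/2) :
    B2cf t = 3/4 - t^2 := by
  rw [B2cf]; split_ifs with g1 g2 g3 <;> nlinarith

lemma B2cf_right {t : ℝ} (h1 : 1/2 ≤ t) (h2 : t ≤ 3/2) :
    B2cf t = (3/2-t)^2/2 := by
  rw [B2cf]; split_ifs with g1 g2 g3 g4 <;> nlinarith

/-- Polynomial reproduction of the quasi-interpolation operator `Q_2`: for a
polynomial `P` of degree at most `2`, `∑_n L_2(P_{n,2}) B_2(x/h - n) = P(x)`. -/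
theorem Q2_reproduces_deg2 (h : ℝ) (hh : 0 < h)
    (P : Polynomial ℝ) (hP : P.degree ≤ 2)
    (Pval : ℤ → ℝ) (hPval : ∀ i : ℤ, Pval i = P.eval ((i : ℝ) * h)) :
    ∀ x : ℝ,
      (∑' n : ℤ, (-(1/8) * Pval (n - 1) + (5/4) * Pval n - (1/8) * Pval (n + 1)) *
          Bspline 2 (x / h - (n : ℝ))) = P.eval x := by
  intro x
  have hnd : P.natDegree ≤ 2 := Polynomial.natDegree_le_iff_degree_le.mpr hP
  have heval : ∀ z : ℝ, P.eval z = P.coeff 0 + P.coeff 1 * z + P.coeff 2 * z^2 := by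
    intro z
    rw [Polynomial.eval_eq_sum_range' (show P.natDegree < 3 by omega) z]
    simp [Finset.sum_range_succ]
    try ring
  set y := x / h with hy
  set m : ℤ := round y with hm
  have hs1 : |y - (m:ℝ)| ≤ 1/2 := abs_sub_round y
  obtain ⟨hs2, hs3⟩ := abs_le.mp hs1
  have key : ∀ n : ℤ, n ∉ ({m-1, m, m+1} : Finset ℤ) →
      (-(1/8) * Pval (n - 1) + (5/4) * Pval n - (1/8) * Pval (n + 1)) *
        Bspline 2 (y - (n : ℝ)) = 0 := by
    intro n hn
    simp only [Finset.mem_insert, Finset.mem_singleton] at hn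
    push_neg at hn
    have hcase : n ≤ m - 2 ∨ m + 2 ≤ n := by omega
    have habs : 3/2 ≤ |y - (n:ℝ)| := by
      rcases hcase with hc | hc
      · have : (n:ℝ) ≤ (m:ℝ) - 2 := by exact_mod_cast hc
        rw [abs_of_nonneg (by linarith)]; linarith
      · have : (m:ℝ) + 2 ≤ (n:ℝ) := by exact_mod_cast hc
        rw [abs_of_nonpos (by linarith)]; linarith
    rw [Bspline2_eq, B2cf_zero habs, mul_zero]
  rw [tsum_eq_sum key,
    Finset.sum_insert (by simp only [Finset.mem_insert, Finset.mem_singleton]; omega),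
    Finset.sum_insert (by simp only [Finset.mem_singleton]; omega),
    Finset.sum_singleton]
  have hx : x = y * h := by rw [hy, div_mul_cancel₀ x hh.ne']
  have eL : Bspline 2 (y - ((m - 1 : ℤ):ℝ)) = (3/2 - (y - (m:ℝ) + 1))^2/2 := by
    rw [Bspline2_eq]; push_cast
    rw [show y - ((m:ℝ) - 1) = y - (m:ℝ) + 1 by ring,
      B2cf_right (by linarith) (by linarith)]
  have eM : Bspline 2 (y - ((m : ℤ):ℝ)) = 3/4 - (y - (m:ℝ))^2 := by
    rw [Bspline2_eq]; push_cast
    rw [B2cf_mid (by linarith) (by linarith)]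
  have eR : Bspline 2 (y - ((m + 1 : ℤ):ℝ)) = (3/2 + (y - (m:ℝ) - 1))^2/2 := by
    rw [Bspline2_eq]; push_cast
    rw [show y - ((m:ℝ) + 1) = y - (m:ℝ) - 1 by ring,
      B2cf_left (by linarith) (by linarith)]
  rw [eL, eM, eR]
  simp only [hPval, heval, hx]
  push_cast
  ring
end

section
/- Let h > 0 and let P : ℝ → ℝ be a polynomial of degree at most 3, with P_i = P(ih). Then for every x ∈ ℝ, Σ_{n∈ℤ} [−(1/6)P_{n−1} + (4/3)P_n − (1/6)P_{n+1}] · B_3(x/h − n) = P(x), where the sum has only finitely many nonzero terms since B_3 is supported in [−2, 2]. -/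
open MeasureTheory intervalIntegral

lemma Bspline_succ (p : ℕ) (x : ℝ) :
    Bspline (p+1) x = ∫ t in (x - 1/2)..(x + 1/2), Bspline p t := by
  show (∫ t in (-(1/2):ℝ)..(1/2), Bspline p (x - t)) = _
  rw [intervalIntegral.integral_comp_sub_left (Bspline p) x]
  norm_num

lemma Bspline_neg : ∀ (p : ℕ) (x : ℝ), Bspline p (-x) = Bspline p x := by
  intro p
  induction p with
  | zero =>
    intro x
    show (if _ then (1:ℝ) else 0) = (if _ then (1:ℝ) else 0)
    by_cases h1 : -(1/2:ℝ) ≤ x ∧ x ≤ 1/2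
    · rw [if_pos ⟨by linarith [h1.2], by linarith [h1.1]⟩, if_pos h1]
    · rw [if_neg (fun hc => h1 ⟨by linarith [hc.2], by linarith [hc.1]⟩), if_neg h1]
  | succ p ih =>
    intro x
    rw [Bspline_succ, Bspline_succ]
    have e : ∫ t in (x-1/2)..(x+1/2), Bspline p (-t) = ∫ t in (-(x+1/2))..(-(x-1/2)), Bspline p t :=
      intervalIntegral.integral_comp_neg (a := x-1/2) (b := x+1/2) (Bspline p)
    have e2 : ∫ t in (x-1/2)..(x+1/2), Bspline p t = ∫ t in (x-1/2)..(x+1/2), Bspline p (-t) := by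
      apply intervalIntegral.integral_congr
      intro t _
      exact (ih t).symm
    rw [e2, e, show -(x+1/2) = -x - 1/2 by ring, show -(x-1/2) = -x + 1/2 by ring]

lemma B0_ii (a b : ℝ) : IntervalIntegrable (Bspline 0) volume a b := by
  have hB : Bspline 0 = Set.indicator (Set.Icc (-(1/2):ℝ) (1/2)) (fun _ => (1:ℝ)) := by
    funext t
    show (if _ then (1:ℝ) else 0) = _
    by_cases h : -(1/2:ℝ) ≤ t ∧ t ≤ 1/2
    · rw [if_pos h, Set.indicator_of_mem (Set.mem_Icc.mpr h)]
    · rw [if_neg h, Set.indicator_of_notMem (fun hc => h (Set.mem_Icc.mp hc))]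
  rw [hB, intervalIntegrable_iff]
  exact (integrableOn_const (by simp)).indicator measurableSet_Icc

lemma integral_congr_off (a b : ℝ) (s : Finset ℝ) {f g : ℝ → ℝ}
    (h : ∀ t ∈ Set.uIoc a b, t ∉ s → f t = g t) :
    ∫ t in a..b, f t = ∫ t in a..b, g t := by
  apply intervalIntegral.integral_congr_ae
  rw [MeasureTheory.ae_iff]
  refine measure_mono_null ?_ ((Finset.countable_toSet s).measure_zero _)
  intro t ht
  simp only [Set.mem_setOf_eq, Classical.not_imp] at ht
  by_contra hts
  exact ht.2 (h t ht.1 hts)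

lemma ii_of_eqOn {f g : ℝ → ℝ} {a b : ℝ} (hg : IntervalIntegrable g volume a b)
    (h : ∀ t ∈ Set.uIoc a b, g t = f t) : IntervalIntegrable f volume a b :=
  hg.congr h

lemma integral_quadratic (c0 c1 c2 a b : ℝ) :
    ∫ t in a..b, (c0 + c1*t + c2*t^2) =
      (c0*b + c1*b^2/2 + c2*b^3/3) - (c0*a + c1*a^2/2 + c2*a^3/3) := by
  have hd : ∀ t : ℝ, HasDerivAt (fun t => c0*t + c1*t^2/2 + c2*t^3/3) (c0 + c1*t + c2*t^2) t := by
    intro t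
    have h1 : HasDerivAt (fun t : ℝ => c0*t) c0 t := by
      simpa using (hasDerivAt_id t).const_mul c0
    have h2 : HasDerivAt (fun t : ℝ => c1*t^2/2) (c1*t) t := by
      have := (hasDerivAt_pow 2 t).const_mul (c1/2)
      rw [show (fun t : ℝ => c1*t^2/2) = fun y => c1/2*y^2 by funext s; ring]
      exact this.congr_deriv (by norm_num; ring)
    have h3 : HasDerivAt (fun t : ℝ => c2*t^3/3) (c2*t^2) t := by
      have := (hasDerivAt_pow 3 t).const_mul (c2/3)
      rw [show (fun t : ℝ => c2*t^3/3) = fun y => c2/3*y^3 by funext s; ring]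
      exact this.congr_deriv (by norm_num; ring)
    exact (h1.add h2).add h3
  rw [intervalIntegral.integral_eq_sub_of_hasDerivAt (fun t _ => hd t)
    ((by fun_prop : Continuous fun t : ℝ => c0 + c1*t + c2*t^2).intervalIntegrable a b)]

lemma integral_split {f g1 g2 : ℝ → ℝ} {a c b : ℝ} (hac : a ≤ c) (hcb : c ≤ b)
    (hg1 : Continuous g1) (hg2 : Continuous g2)
    (h1 : ∀ t, a ≤ t → t ≤ c → f t = g1 t) (h2 : ∀ t, c ≤ t → t ≤ b → f t = g2 t) :
    ∫ t in a..b, f t = (∫ t in a..c, g1 t) + ∫ t in c..b, g2 t := by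
  have e1 : ∫ t in a..c, f t = ∫ t in a..c, g1 t := by
    apply intervalIntegral.integral_congr
    rw [Set.uIcc_of_le hac]
    intro t ht; exact h1 t ht.1 ht.2
  have e2 : ∫ t in c..b, f t = ∫ t in c..b, g2 t := by
    apply intervalIntegral.integral_congr
    rw [Set.uIcc_of_le hcb]
    intro t ht; exact h2 t ht.1 ht.2
  have i1 : IntervalIntegrable f volume a c := by
    apply ii_of_eqOn (hg1.intervalIntegrable a c)
    intro t ht
    rw [Set.uIoc_of_le hac] at ht
    exact (h1 t ht.1.le ht.2).symm
  have i2 : IntervalIntegrable f volume c b := by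
    apply ii_of_eqOn (hg2.intervalIntegrable c b)
    intro t ht
    rw [Set.uIoc_of_le hcb] at ht
    exact (h2 t ht.1.le ht.2).symm
  rw [← intervalIntegral.integral_add_adjacent_intervals i1 i2, e1, e2]

lemma B0_one {x : ℝ} (h1 : -(1/2) ≤ x) (h2 : x ≤ 1/2) : Bspline 0 x = 1 := by
  simp only [Bspline]
  rw [if_pos ⟨h1, h2⟩]

lemma B0_zero_right {x : ℝ} (h1 : 1/2 < x) : Bspline 0 x = 0 := by
  simp only [Bspline]
  rw [if_neg (fun hc => absurd hc.2 (not_le.mpr h1))]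

-- integral of B0 over [a,b] ⊆ [-1/2, 1/2]
lemma B0_int_one {a b : ℝ} (hab : a ≤ b) (ha : -(1/2) ≤ a) (hb : b ≤ 1/2) :
    ∫ t in a..b, Bspline 0 t = b - a := by
  have : ∫ t in a..b, Bspline 0 t = ∫ t in a..b, (1:ℝ) := by
    apply intervalIntegral.integral_congr
    rw [Set.uIcc_of_le hab]
    intro t ht
    exact B0_one (le_trans ha ht.1) (le_trans ht.2 hb)
  rw [this]; simp

lemma B0_int_zero_right {a b : ℝ} (hab : a ≤ b) (ha : 1/2 ≤ a) :
    ∫ t in a..b, Bspline 0 t = 0 := by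
  have : ∫ t in a..b, Bspline 0 t = ∫ t in a..b, (0:ℝ) := by
    apply integral_congr_off a b ∅
    intro t ht _
    rw [Set.uIoc_of_le hab] at ht
    exact B0_zero_right (lt_of_le_of_lt ha ht.1)
  rw [this]; simp

lemma B0_int_zero_left {a b : ℝ} (hab : a ≤ b) (hb : b ≤ -(1/2)) :
    ∫ t in a..b, Bspline 0 t = 0 := by
  have : ∫ t in a..b, Bspline 0 t = ∫ t in a..b, (0:ℝ) := by
    apply integral_congr_off a b {-(1/2)}
    intro t ht hts
    rw [Set.uIoc_of_le hab] at ht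
    simp only [Finset.mem_singleton] at hts
    have : t < -(1/2) := lt_of_le_of_ne (le_trans ht.2 hb) hts
    rw [← Bspline_neg 0 t, show -t = -t by rfl]
    exact B0_zero_right (by linarith)
  rw [this]; simp

-- Level 1
lemma B1_b {x : ℝ} (h1 : 0 ≤ x) (h2 : x ≤ 1) : Bspline 1 x = 1 - x := by
  rw [Bspline_succ]
  have key : ∫ t in (x-1/2)..(x+1/2), Bspline 0 t =
      (∫ t in (x-1/2)..(1/2), Bspline 0 t) + ∫ t in (1/2)..(x+1/2), Bspline 0 t := by
    rw [intervalIntegral.integral_add_adjacent_intervals (B0_ii _ _) (B0_ii _ _)]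
  rw [key, B0_int_one (by linarith) (by linarith) (by linarith),
    B0_int_zero_right (by linarith) (by linarith)]
  ring

lemma B1_a {x : ℝ} (h1 : -1 ≤ x) (h2 : x ≤ 0) : Bspline 1 x = 1 + x := by
  rw [← Bspline_neg 1 x, B1_b (by linarith) (by linarith)]
  ring

lemma B1_zero {x : ℝ} (h1 : 1 ≤ x) : Bspline 1 x = 0 := by
  rw [Bspline_succ]
  exact B0_int_zero_right (by linarith) (by linarith)

lemma B1_zero' {x : ℝ} (h1 : 1 ≤ |x|) : Bspline 1 x = 0 := by
  rcases abs_le.mp (le_refl |x|) with _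
  rcases le_or_gt 1 x with hx | hx
  · exact B1_zero hx
  · have : 1 ≤ -x := by rcases abs_cases x with ⟨h,_⟩ | ⟨h,_⟩ <;> linarith
    rw [← Bspline_neg 1 x]
    exact B1_zero this

-- Level 2
lemma B2_a {x : ℝ} (h1 : -(1/2) ≤ x) (h2 : x ≤ 1/2) : Bspline 2 x = 3/4 - x^2 := by
  rcases le_or_gt 0 x with hx | hx
  · rw [Bspline_succ]
    rw [integral_split (c := 0) (g1 := fun t => 1 + 1*t + 0*t^2) (g2 := fun t => 1 + (-1)*t + 0*t^2)
      (by linarith) (by linarith) (by fun_prop) (by fun_prop)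
      (fun t ht1 ht2 => by rw [B1_a (by linarith) ht2]; ring)
      (fun t ht1 ht2 => by rw [B1_b ht1 (by linarith)]; ring)]
    rw [integral_quadratic, integral_quadratic]
    ring
  · rw [← Bspline_neg 2 x]
    have : Bspline 2 (-x) = 3/4 - (-x)^2 := by
      rw [Bspline_succ]
      rw [integral_split (c := 0) (g1 := fun t => 1 + 1*t + 0*t^2) (g2 := fun t => 1 + (-1)*t + 0*t^2)
        (by linarith) (by linarith) (by fun_prop) (by fun_prop)
        (fun t ht1 ht2 => by rw [B1_a (by linarith) ht2]; ring)
        (fun t ht1 ht2 => by rw [B1_b ht1 (by linarith)]; ring)]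
      rw [integral_quadratic, integral_quadratic]
      ring
    rw [this]; ring

lemma B2_b {x : ℝ} (h1 : 1/2 ≤ x) (h2 : x ≤ 3/2) : Bspline 2 x = (3/2 - x)^2/2 := by
  rw [Bspline_succ]
  rw [integral_split (c := 1) (g1 := fun t => 1 + (-1)*t + 0*t^2) (g2 := fun t => 0 + 0*t + 0*t^2)
    (by linarith) (by linarith) (by fun_prop) (by fun_prop)
    (fun t ht1 ht2 => by rw [B1_b (by linarith) ht2]; ring)
    (fun t ht1 ht2 => by rw [B1_zero ht1]; ring)]
  rw [integral_quadratic, integral_quadratic]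
  ring

lemma B2_zero {x : ℝ} (h1 : 3/2 ≤ x) : Bspline 2 x = 0 := by
  rw [Bspline_succ]
  have : ∫ t in (x-1/2)..(x+1/2), Bspline 1 t = ∫ t in (x-1/2)..(x+1/2), (0:ℝ) := by
    apply intervalIntegral.integral_congr
    rw [Set.uIcc_of_le (by linarith)]
    intro t ht
    exact B1_zero (by linarith [ht.1])
  rw [this]; simp

lemma B2_zero' {x : ℝ} (h1 : 3/2 ≤ |x|) : Bspline 2 x = 0 := by
  rcases le_or_gt (3/2) x with hx | hx
  · exact B2_zero hx
  · have : (3/2:ℝ) ≤ -x := by rcases abs_cases x with ⟨h,_⟩ | ⟨h,_⟩ <;> linarith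
    rw [← Bspline_neg 2 x]
    exact B2_zero this

-- Level 3
lemma B3_a {x : ℝ} (h1 : 0 ≤ x) (h2 : x ≤ 1) : Bspline 3 x = 2/3 - x^2 + x^3/2 := by
  rw [Bspline_succ]
  rw [integral_split (c := 1/2) (g1 := fun t => 3/4 + 0*t + (-1)*t^2)
    (g2 := fun t => 9/8 + (-(3/2))*t + (1/2)*t^2)
    (by linarith) (by linarith) (by fun_prop) (by fun_prop)
    (fun t ht1 ht2 => by rw [B2_a (by linarith) ht2]; ring)
    (fun t ht1 ht2 => by rw [B2_b ht1 (by linarith)]; ring)]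
  rw [integral_quadratic, integral_quadratic]
  ring

lemma B3_b {x : ℝ} (h1 : 1 ≤ x) (h2 : x ≤ 2) : Bspline 3 x = (2 - x)^3/6 := by
  rw [Bspline_succ]
  rw [integral_split (c := 3/2) (g1 := fun t => 9/8 + (-(3/2))*t + (1/2)*t^2)
    (g2 := fun t => 0 + 0*t + 0*t^2)
    (by linarith) (by linarith) (by fun_prop) (by fun_prop)
    (fun t ht1 ht2 => by rw [B2_b (by linarith) ht2]; ring)
    (fun t ht1 ht2 => by rw [B2_zero ht1]; ring)]
  rw [integral_quadratic, integral_quadratic]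
  ring

lemma B3_zero {x : ℝ} (h1 : 2 ≤ |x|) : Bspline 3 x = 0 := by
  have key : ∀ y : ℝ, 2 ≤ y → Bspline 3 y = 0 := by
    intro y hy
    rw [Bspline_succ]
    have : ∫ t in (y-1/2)..(y+1/2), Bspline 2 t = ∫ t in (y-1/2)..(y+1/2), (0:ℝ) := by
      apply intervalIntegral.integral_congr
      rw [Set.uIcc_of_le (by linarith)]
      intro t ht
      exact B2_zero (by linarith [ht.1])
    rw [this]; simp
  rcases le_or_gt 2 x with hx | hx
  · exact key x hx
  · have : (2:ℝ) ≤ -x := by rcases abs_cases x with ⟨h,_⟩ | ⟨h,_⟩ <;> linarith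
    rw [← Bspline_neg 3 x]
    exact key (-x) this

/-- Polynomial reproduction of the quasi-interpolation operator `Q_3`: for a
polynomial `P` of degree at most `3`, `∑_n L_3(P_{n,3}) B_3(x/h - n) = P(x)`. -/
theorem Q3_reproduces_deg3 (h : ℝ) (hh : 0 < h)
    (P : Polynomial ℝ) (hP : P.degree ≤ 3)
    (Pval : ℤ → ℝ) (hPval : ∀ i : ℤ, Pval i = P.eval ((i : ℝ) * h)) :
    ∀ x : ℝ,
      (∑' n : ℤ, (-(1/6) * Pval (n - 1) + (4/3) * Pval n - (1/6) * Pval (n + 1)) *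
          Bspline 3 (x / h - (n : ℝ))) = P.eval x := by
  intro x
  set y : ℝ := x / h with hy
  set m : ℤ := ⌊y⌋ with hm
  have hu1 : (m:ℝ) ≤ y := Int.floor_le y
  have hu2 : y < m + 1 := Int.lt_floor_add_one y
  have hzero : ∀ n ∉ ({m-1, m, m+1, m+2} : Finset ℤ),
      (-(1/6) * Pval (n - 1) + (4/3) * Pval n - (1/6) * Pval (n + 1)) *
          Bspline 3 (y - (n:ℝ)) = 0 := by
    intro n hn
    simp only [Finset.mem_insert, Finset.mem_singleton] at hn
    push_neg at hn
    have hcases : n ≤ m - 2 ∨ m + 3 ≤ n := by omega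
    have habs : 2 ≤ |y - (n:ℝ)| := by
      rcases hcases with hc | hc
      · have : (n:ℝ) ≤ (m:ℝ) - 2 := by
          have := (Int.cast_le (R := ℝ)).mpr hc
          push_cast at this ⊢
          linarith
        exact le_abs.mpr (Or.inl (by linarith))
      · have : (m:ℝ) + 3 ≤ (n:ℝ) := by
          have := (Int.cast_le (R := ℝ)).mpr hc
          push_cast at this ⊢
          linarith
        exact le_abs.mpr (Or.inr (by linarith))
    rw [B3_zero habs, mul_zero]
  rw [tsum_eq_sum hzero]
  have hsum : ∑ n ∈ ({m-1, m, m+1, m+2} : Finset ℤ),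
      (-(1/6) * Pval (n - 1) + (4/3) * Pval n - (1/6) * Pval (n + 1)) *
          Bspline 3 (y - (n:ℝ)) =
      (-(1/6) * Pval (m-1-1) + (4/3) * Pval (m-1) - (1/6) * Pval (m-1+1)) * Bspline 3 (y - ((m:ℝ)-1)) +
      (-(1/6) * Pval (m-1) + (4/3) * Pval m - (1/6) * Pval (m+1)) * Bspline 3 (y - (m:ℝ)) +
      (-(1/6) * Pval (m+1-1) + (4/3) * Pval (m+1) - (1/6) * Pval (m+1+1)) * Bspline 3 (y - ((m:ℝ)+1)) +
      (-(1/6) * Pval (m+2-1) + (4/3) * Pval (m+2) - (1/6) * Pval (m+2+1)) * Bspline 3 (y - ((m:ℝ)+2)) := by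
    rw [Finset.sum_insert (by simp only [Finset.mem_insert, Finset.mem_singleton]; omega),
        Finset.sum_insert (by simp only [Finset.mem_insert, Finset.mem_singleton]; omega),
        Finset.sum_insert (by simp only [Finset.mem_singleton]; omega),
        Finset.sum_singleton]
    push_cast
    ring
  rw [hsum]
  -- B-spline values
  have c1 : Bspline 3 (y - ((m:ℝ)-1)) = (1-(y-(m:ℝ)))^3/6 := by
    rw [show y - ((m:ℝ)-1) = (y - (m:ℝ)) + 1 by ring,
      B3_b (by linarith) (by linarith)]
    ring
  have c2 : Bspline 3 (y - (m:ℝ)) = 2/3 - (y-(m:ℝ))^2 + (y-(m:ℝ))^3/2 :=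
    B3_a (by linarith) (by linarith)
  have c3 : Bspline 3 (y - ((m:ℝ)+1)) = 2/3 - (1-(y-(m:ℝ)))^2 + (1-(y-(m:ℝ)))^3/2 := by
    rw [← Bspline_neg 3 (y - ((m:ℝ)+1)),
      show -(y - ((m:ℝ)+1)) = 1 - (y - (m:ℝ)) by ring,
      B3_a (by linarith) (by linarith)]
  have c4 : Bspline 3 (y - ((m:ℝ)+2)) = (y-(m:ℝ))^3/6 := by
    rw [← Bspline_neg 3 (y - ((m:ℝ)+2)),
      show -(y - ((m:ℝ)+2)) = 2 - (y - (m:ℝ)) by ring,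
      B3_b (by linarith) (by linarith)]
    ring
  rw [c1, c2, c3, c4]
  -- polynomial expansion
  have hev : ∀ z : ℝ, P.eval z = P.coeff 0 + P.coeff 1 * z + P.coeff 2 * z^2 + P.coeff 3 * z^3 := by
    intro z
    rw [Polynomial.eval_eq_sum_range' (n := 4)
      (lt_of_le_of_lt (Polynomial.natDegree_le_iff_degree_le.mpr hP) (by norm_num)) z]
    simp [Finset.sum_range_succ]
  have hx : x = y * h := by
    rw [hy]
    field_simp
  simp only [hPval, hev, hx]
  push_cast
  ring
end

section
/- For every polynomial P : ℝ → ℝ of degree at most 3, ∫_0^1 P(x) dx = (103/192)·(P(0) + P(1)) − (13/384)·(P(−1) + P(2)) − (1/384)·(P(−2) + P(3)). -/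
open MeasureTheory intervalIntegral

/-- Exactness of the single-interval B-spline integration rule of order `p = 2`
on polynomials of degree at most `3`. -/
theorem rule_p2_exact_deg3 (P : Polynomial ℝ) (hP : P.degree ≤ 3) :
    ∫ x in (0 : ℝ)..1, P.eval x =
      (103/192) * (P.eval 0 + P.eval 1) - (13/384) * (P.eval (-1) + P.eval 2)
        - (1/384) * (P.eval (-2) + P.eval 3) := by
  have hd : P.natDegree < 4 := by
    have : P.natDegree ≤ 3 := Polynomial.natDegree_le_iff_degree_le.mpr hP
    omega
  have h : ∀ x : ℝ, P.eval x = ∑ i ∈ Finset.range 4, P.coeff i * x ^ i := fun x =>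
    Polynomial.eval_eq_sum_range' hd x
  simp only [h]
  rw [intervalIntegral.integral_finset_sum
    (fun i _ => ((intervalIntegrable_pow i).const_mul (P.coeff i)))]
  simp only [intervalIntegral.integral_const_mul, integral_pow,
    Finset.sum_range_succ, Finset.sum_range_zero]
  norm_num
  ring
end

section
/- For every polynomial P : ℝ → ℝ of degree at most 3, ∫_0^1 P(x) dx = (19/36)·(P(0) + P(1)) − (1/48)·(P(−1) + P(2)) − (1/144)·(P(−2) + P(3)). -/
open MeasureTheory intervalIntegral

/-- Exactness of the single-interval B-spline integration rule of order `p = 3`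
on polynomials of degree at most `3`. -/
theorem rule_p3_exact_deg3 (P : Polynomial ℝ) (hP : P.degree ≤ 3) :
    ∫ x in (0 : ℝ)..1, P.eval x =
      (19/36) * (P.eval 0 + P.eval 1) - (1/48) * (P.eval (-1) + P.eval 2)
        - (1/144) * (P.eval (-2) + P.eval 3) := by
  have hev : ∀ x : ℝ, P.eval x =
      P.coeff 0 + P.coeff 1 * x + P.coeff 2 * x ^ 2 + P.coeff 3 * x ^ 3 := by
    intro x
    have hnat : P.natDegree < 4 :=
      Nat.lt_succ_of_le (Polynomial.natDegree_le_iff_degree_le.2 hP)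
    rw [Polynomial.eval_eq_sum_range' hnat]
    simp [Finset.sum_range_succ]
  have h : ∫ x in (0:ℝ)..1, P.eval x =
      ∫ x in (0:ℝ)..1, (P.coeff 0 + P.coeff 1 * x + P.coeff 2 * x ^ 2 + P.coeff 3 * x ^ 3) := by
    exact intervalIntegral.integral_congr fun x _ => hev x
  rw [h]
  have : ∫ x in (0:ℝ)..1,
      (P.coeff 0 + P.coeff 1 * x + P.coeff 2 * x ^ 2 + P.coeff 3 * x ^ 3)
      = P.coeff 0 + P.coeff 1 / 2 + P.coeff 2 / 3 + P.coeff 3 / 4 := by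
    have : ∀ x ∈ Set.uIcc (0:ℝ) 1,
        HasDerivAt (fun x : ℝ => P.coeff 0 * x + P.coeff 1 * x ^ 2 / 2
          + P.coeff 2 * x ^ 3 / 3 + P.coeff 3 * x ^ 4 / 4)
          (P.coeff 0 + P.coeff 1 * x + P.coeff 2 * x ^ 2 + P.coeff 3 * x ^ 3) x := by
      intro x _
      have := ((((hasDerivAt_id x).const_mul (P.coeff 0)).add
        (((hasDerivAt_pow 2 x).const_mul (P.coeff 1)).div_const 2)).add
        (((hasDerivAt_pow 3 x).const_mul (P.coeff 2)).div_const 3)).add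
        (((hasDerivAt_pow 4 x).const_mul (P.coeff 3)).div_const 4)
      refine this.congr_deriv ?_
      ring
    rw [intervalIntegral.integral_eq_sub_of_hasDerivAt this (Continuous.intervalIntegrable (by continuity) 0 1)]
    norm_num
  rw [this, hev 0, hev 1, hev (-1), hev 2, hev (-2), hev 3]
  ring
end

section
/- Let a < b be real numbers and let f : ℝ → ℝ be four times continuously differentiable on ℝ. For N ∈ ℕ with N ≥ 6 set h = (b−a)/N, x_i = a + i·h, and define T^2_{[a,b],N}(f) = (h/2)(f(x_0) + f(x_N)) + h·Σ_{i=1}^{N−1} f(x_i) − (h/384)·(f(x_{−2}) − f(x_2) + f(x_{N+2}) − f(x_{N−2})) − (7h/192)·(f(x_{−1}) − f(x_1) + f(x_{N+1}) − f(x_{N−1})). Then there exists a constant C > 0 such that for all N ≥ 6, |∫_a^b f(x) dx − T^2_{[a,b],N}(f)| ≤ C·h^4. -/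
open MeasureTheory intervalIntegral Set

lemma bnd_of_deriv {g g' : ℝ → ℝ} {C T : ℝ}
    (hg : ∀ t, HasDerivAt g (g' t) t) (hg0 : g 0 = 0)
    (hb : ∀ t ∈ Icc (0:ℝ) T, |g' t| ≤ C) :
    ∀ t ∈ Icc (0:ℝ) T, |g t| ≤ C * t := by
  intro t ht
  have hsub : Icc (0:ℝ) t ⊆ Icc 0 T := Icc_subset_Icc le_rfl ht.2
  have := Convex.norm_image_sub_le_of_norm_hasDerivWithin_le
    (f := g) (f' := g') (s := Icc (0:ℝ) t)
    (fun y hy => (hg y).hasDerivWithinAt)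
    (fun y hy => hb y (hsub hy)) (convex_Icc 0 t)
    (Set.left_mem_Icc.2 ht.1) (Set.right_mem_Icc.2 ht.1)
  simpa [hg0, abs_of_nonneg ht.1, Real.norm_eq_abs] using this

lemma chain3 {g g1 g2 g3 : ℝ → ℝ} {D T : ℝ} (hT : 0 ≤ T)
    (h01 : ∀ t, HasDerivAt g (g1 t) t) (h12 : ∀ t, HasDerivAt g1 (g2 t) t)
    (h23 : ∀ t, HasDerivAt g2 (g3 t) t)
    (z0 : g 0 = 0) (z1 : g1 0 = 0) (z2 : g2 0 = 0)
    (hb : ∀ t ∈ Icc (0:ℝ) T, |g3 t| ≤ D) : |g T| ≤ D * T ^ 3 := by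
  have hD : 0 ≤ D := le_trans (abs_nonneg _) (hb 0 ⟨le_rfl, hT⟩)
  have b2 : ∀ t ∈ Icc (0:ℝ) T, |g2 t| ≤ D * T := by
    intro t ht
    exact le_trans (bnd_of_deriv h23 z2 hb t ht)
      (by nlinarith [ht.1, ht.2])
  have b1 : ∀ t ∈ Icc (0:ℝ) T, |g1 t| ≤ D * T * T := by
    intro t ht
    exact le_trans (bnd_of_deriv h12 z1 b2 t ht) (by nlinarith [ht.1, ht.2, mul_nonneg hD hT])
  have b0 := bnd_of_deriv h01 z0 b1 T ⟨hT, le_rfl⟩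
  calc |g T| ≤ D * T * T * T := b0
  _ = D * T ^ 3 := by ring

lemma interval_EM {f f1 f2 f3 f4 : ℝ → ℝ}
    (d0 : ∀ x, HasDerivAt f (f1 x) x) (d1 : ∀ x, HasDerivAt f1 (f2 x) x)
    (d2 : ∀ x, HasDerivAt f2 (f3 x) x) (d3 : ∀ x, HasDerivAt f3 (f4 x) x)
    (hc : Continuous f) {M x h : ℝ} (hh : 0 ≤ h)
    (hbd : ∀ t ∈ Icc (0:ℝ) h, |f4 (x + t)| ≤ M) :
    |(∫ t in x..(x+h), f t) - h/2*(f x + f (x+h)) + h^2/12*(f1 (x+h) - f1 x)|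
      ≤ M * h^2 / 12 * h^3 := by
  set g : ℝ → ℝ := fun t => (∫ s in x..(x+t), f s) - t/2*(f x + f (x+t))
      + t^2/12*(f1 (x+t) - f1 x) with hg
  set g1 : ℝ → ℝ := fun t => f (x+t) - (1/2)*(f x + f (x+t)) - t/2 * f1 (x+t)
      + t/6*(f1 (x+t) - f1 x) + t^2/12 * f2 (x+t) with hg1
  set g2 : ℝ → ℝ := fun t => (1/6)*(f1 (x+t) - f1 x) - t/6 * f2 (x+t)
      + t^2/12 * f3 (x+t) with hg2
  set g3 : ℝ → ℝ := fun t => t^2/12 * f4 (x+t) with hg3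
  have hA : ∀ t : ℝ, HasDerivAt (fun t : ℝ => x + t) 1 t := fun t => by
    simpa using (hasDerivAt_id t).const_add x
  have hft : ∀ t, HasDerivAt (fun t => f (x+t)) (f1 (x+t)) t := fun t => by
    simpa [Function.comp_def] using (d0 (x+t)).comp t (hA t)
  have hf1t : ∀ t, HasDerivAt (fun t => f1 (x+t)) (f2 (x+t)) t := fun t => by
    simpa [Function.comp_def] using (d1 (x+t)).comp t (hA t)
  have hf2t : ∀ t, HasDerivAt (fun t => f2 (x+t)) (f3 (x+t)) t := fun t => by
    simpa [Function.comp_def] using (d2 (x+t)).comp t (hA t)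
  have hf3t : ∀ t, HasDerivAt (fun t => f3 (x+t)) (f4 (x+t)) t := fun t => by
    simpa [Function.comp_def] using (d3 (x+t)).comp t (hA t)
  have FTC : ∀ u : ℝ, HasDerivAt (fun u => ∫ s in x..u, f s) (f u) u := fun u =>
    intervalIntegral.integral_hasDerivAt_right (hc.intervalIntegrable _ _)
      (hc.stronglyMeasurableAtFilter _ _) hc.continuousAt
  have h01 : ∀ t, HasDerivAt g (g1 t) t := by
    intro t
    have h1 : HasDerivAt (fun t => ∫ s in x..(x+t), f s) (f (x+t)) t := by
      simpa [Function.comp_def] using (FTC (x+t)).comp t (hA t)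
    have h2 : HasDerivAt (fun t : ℝ => t/2*(f x + f (x+t)))
        (1/2*(f x + f (x+t)) + t/2 * f1 (x+t)) t := by
      have := ((hasDerivAt_id t).div_const 2).mul ((hft t).const_add (f x))
      exact this.congr_deriv (by simp only [id])
    have h3 : HasDerivAt (fun t : ℝ => t^2/12*(f1 (x+t) - f1 x))
        (t/6*(f1 (x+t) - f1 x) + t^2/12 * f2 (x+t)) t := by
      have := ((hasDerivAt_pow 2 t).div_const 12).mul ((hf1t t).sub_const (f1 x))
      exact this.congr_deriv (by ring)
    have := (h1.sub h2).add h3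
    exact this.congr_deriv (by simp only [hg1]; ring)
  have h12 : ∀ t, HasDerivAt g1 (g2 t) t := by
    intro t
    have h2 : HasDerivAt (fun t : ℝ => (1/2)*(f x + f (x+t))) (1/2 * f1 (x+t)) t :=
      ((hft t).const_add (f x)).const_mul (1/2)
    have h3 : HasDerivAt (fun t : ℝ => t/2 * f1 (x+t))
        (1/2 * f1 (x+t) + t/2 * f2 (x+t)) t := by
      have := ((hasDerivAt_id t).div_const 2).mul (hf1t t)
      exact this.congr_deriv (by simp only [id])
    have h4 : HasDerivAt (fun t : ℝ => t/6*(f1 (x+t) - f1 x))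
        (1/6*(f1 (x+t) - f1 x) + t/6 * f2 (x+t)) t := by
      have := ((hasDerivAt_id t).div_const 6).mul ((hf1t t).sub_const (f1 x))
      exact this.congr_deriv (by simp only [id])
    have h5 : HasDerivAt (fun t : ℝ => t^2/12 * f2 (x+t))
        (t/6 * f2 (x+t) + t^2/12 * f3 (x+t)) t := by
      have := ((hasDerivAt_pow 2 t).div_const 12).mul (hf2t t)
      exact this.congr_deriv (by ring)
    have := ((((hft t).sub h2).sub h3).add h4).add h5
    exact this.congr_deriv (by simp only [hg2]; ring)
  have h23 : ∀ t, HasDerivAt g2 (g3 t) t := by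
    intro t
    have h2 : HasDerivAt (fun t : ℝ => (1/6)*(f1 (x+t) - f1 x)) (1/6 * f2 (x+t)) t :=
      ((hf1t t).sub_const (f1 x)).const_mul (1/6)
    have h3 : HasDerivAt (fun t : ℝ => t/6 * f2 (x+t))
        (1/6 * f2 (x+t) + t/6 * f3 (x+t)) t := by
      have := ((hasDerivAt_id t).div_const 6).mul (hf2t t)
      exact this.congr_deriv (by simp only [id])
    have h4 : HasDerivAt (fun t : ℝ => t^2/12 * f3 (x+t))
        (t/6 * f3 (x+t) + t^2/12 * f4 (x+t)) t := by
      have := ((hasDerivAt_pow 2 t).div_const 12).mul (hf3t t)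
      exact this.congr_deriv (by ring)
    have := (h2.sub h3).add h4
    exact this.congr_deriv (by simp only [hg3]; ring)
  have z0 : g 0 = 0 := by simp [hg]
  have z1 : g1 0 = 0 := by simp [hg1]; ring
  have z2 : g2 0 = 0 := by simp [hg2]
  have hb : ∀ t ∈ Icc (0:ℝ) h, |g3 t| ≤ M * h^2 / 12 := by
    intro t ht
    have hM : 0 ≤ M := le_trans (abs_nonneg _) (hbd 0 ⟨le_rfl, hh⟩)
    have := hbd t ht
    simp only [hg3, abs_mul]
    rw [abs_of_nonneg (by positivity : (0:ℝ) ≤ t^2/12)]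
    have h1 : t^2 ≤ h^2 := by nlinarith [ht.1, ht.2]
    calc t^2/12 * |f4 (x+t)| ≤ t^2/12 * M :=
          mul_le_mul_of_nonneg_left this (by positivity)
      _ ≤ M * h^2/12 := by nlinarith
  have := chain3 hh h01 h12 h23 z0 z1 z2 hb
  simpa [hg] using this
lemma psi_bound {f f1 f2 f3 : ℝ → ℝ}
    (d0 : ∀ x, HasDerivAt f (f1 x) x) (d1 : ∀ x, HasDerivAt f1 (f2 x) x)
    (d2 : ∀ x, HasDerivAt f2 (f3 x) x)
    {M3 x T : ℝ} (hT : 0 ≤ T)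
    (hbd : ∀ t ∈ Icc (0:ℝ) T, |f3 (x - t)| ≤ M3 ∧ |f3 (x + t)| ≤ M3) :
    |f (x - T) - f (x + T) + 2 * T * f1 x| ≤ 2 * M3 * T ^ 3 := by
  set g : ℝ → ℝ := fun t => f (x-t) - f (x+t) + 2 * t * f1 x with hg
  set g1 : ℝ → ℝ := fun t => -f1 (x-t) - f1 (x+t) + 2 * f1 x with hg1
  set g2 : ℝ → ℝ := fun t => f2 (x-t) - f2 (x+t) with hg2
  set g3 : ℝ → ℝ := fun t => -f3 (x-t) - f3 (x+t) with hg3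
  have hA : ∀ t : ℝ, HasDerivAt (fun t : ℝ => x + t) 1 t := fun t => by
    simpa using (hasDerivAt_id t).const_add x
  have hB : ∀ t : ℝ, HasDerivAt (fun t : ℝ => x - t) (-1) t := fun t =>
    (hasDerivAt_id t).const_sub x
  have cP : ∀ (u : ℝ → ℝ) (u' : ℝ → ℝ), (∀ y, HasDerivAt u (u' y) y) →
      ∀ t, HasDerivAt (fun t => u (x+t)) (u' (x+t)) t := fun u u' hu t => by
    simpa [Function.comp_def] using (hu (x+t)).comp t (hA t)
  have cM : ∀ (u : ℝ → ℝ) (u' : ℝ → ℝ), (∀ y, HasDerivAt u (u' y) y) →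
      ∀ t, HasDerivAt (fun t => u (x-t)) (-u' (x-t)) t := fun u u' hu t => by
    simpa [Function.comp_def] using (hu (x-t)).comp t (hB t)
  have h01 : ∀ t, HasDerivAt g (g1 t) t := by
    intro t
    have := ((cM f f1 d0 t).sub (cP f f1 d0 t)).add
      (((hasDerivAt_id t).const_mul 2).mul_const (f1 x))
    exact this.congr_deriv (by simp only [hg1]; ring)
  have h12 : ∀ t, HasDerivAt g1 (g2 t) t := by
    intro t
    have := (((cM f1 f2 d1 t).neg).sub (cP f1 f2 d1 t)).add_const (2 * f1 x)
    exact this.congr_deriv (by simp only [hg2]; ring)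
  have h23 : ∀ t, HasDerivAt g2 (g3 t) t := by
    intro t
    exact (cM f2 f3 d2 t).sub (cP f2 f3 d2 t)
  have z0 : g 0 = 0 := by simp [hg]
  have z1 : g1 0 = 0 := by simp [hg1]; ring
  have z2 : g2 0 = 0 := by simp [hg2]
  have hb : ∀ t ∈ Icc (0:ℝ) T, |g3 t| ≤ 2 * M3 := by
    intro t ht
    obtain ⟨h1, h2⟩ := hbd t ht
    calc |g3 t| ≤ |f3 (x-t)| + |f3 (x+t)| := by
          simp only [hg3]
          exact (abs_sub _ _).trans (by rw [abs_neg])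
      _ ≤ 2 * M3 := by linarith
  simpa [hg] using chain3 hT h01 h12 h23 z0 z1 z2 hb

set_option maxHeartbeats 1000000 in
/-- Error bound for the composite B-spline rule `T²_{[a,b],N}` (case `p = 2` of the
Proposition): for `f ∈ C⁴`, the error is `O(h⁴)` with `h = (b-a)/N`. -/
theorem T2_error_order_four (a b : ℝ) (hab : a < b) (f : ℝ → ℝ)
    (hf : ContDiff ℝ 4 f) :
    ∃ C > 0, ∀ N : ℕ, 6 ≤ N →
      |(∫ x in a..b, f x) -
          ((((b - a) / N) / 2) * (f (a + 0 * ((b - a) / N)) + f (a + (N : ℝ) * ((b - a) / N)))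
            + ((b - a) / N) * ∑ i ∈ Finset.Icc (1 : ℤ) ((N : ℤ) - 1),
                f (a + (i : ℝ) * ((b - a) / N))
            - (((b - a) / N) / 384) *
                (f (a + (-2 : ℝ) * ((b - a) / N)) - f (a + (2 : ℝ) * ((b - a) / N))
                  + f (a + ((N : ℝ) + 2) * ((b - a) / N))
                  - f (a + ((N : ℝ) - 2) * ((b - a) / N)))
            - (7 * ((b - a) / N) / 192) *
                (f (a + (-1 : ℝ) * ((b - a) / N)) - f (a + (1 : ℝ) * ((b - a) / N))
                  + f (a + ((N : ℝ) + 1) * ((b - a) / N))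
                  - f (a + ((N : ℝ) - 1) * ((b - a) / N))))| ≤
        C * ((b - a) / N) ^ 4 := by
  -- extract derivatives
  have key4 : ∀ k : ℕ, k + 1 ≤ 4 → ContDiff ℝ 1 (deriv^[k] f) := by
    intro k hk
    have : ContDiff ℝ ((1 + k : ℕ) : WithTop ℕ∞) f := by
      apply hf.of_le
      exact_mod_cast Nat.cast_le.2 (show 1 + k ≤ 4 by omega)
    exact ContDiff.iterate_deriv' 1 k this
  have D : ∀ k : ℕ, k + 1 ≤ 4 → ∀ x, HasDerivAt (deriv^[k] f) (deriv (deriv^[k] f) x) x :=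
    fun k hk x => ((key4 k hk).differentiable one_ne_zero x).hasDerivAt
  set f1 := deriv f with hf1
  set f2 := deriv f1 with hf2
  set f3 := deriv f2 with hf3
  set f4 := deriv f3 with hf4
  have d0 : ∀ x, HasDerivAt f (f1 x) x := D 0 (by norm_num)
  have d1 : ∀ x, HasDerivAt f1 (f2 x) x := D 1 (by norm_num)
  have d2 : ∀ x, HasDerivAt f2 (f3 x) x := D 2 (by norm_num)
  have d3 : ∀ x, HasDerivAt f3 (f4 x) x := D 3 (by norm_num)
  have hcont : Continuous f := hf.continuous
  have hc3 : Continuous f3 := ((key4 3 (by norm_num)).differentiable one_ne_zero).continuous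
  have hc4 : Continuous f4 := by
    have : ContDiff ℝ 0 (deriv^[4] f) := ContDiff.iterate_deriv' 0 4 (by exact_mod_cast hf)
    exact this.continuous
  -- bounds on a compact neighborhood
  obtain ⟨M4, hM4⟩ := (isCompact_Icc (a := 2*a-b) (b := 2*b-a)).exists_bound_of_continuousOn
    hc4.continuousOn
  obtain ⟨M3, hM3⟩ := (isCompact_Icc (a := 2*a-b) (b := 2*b-a)).exists_bound_of_continuousOn
    hc3.continuousOn
  set M4' := max M4 0 with hM4'
  set M3' := max M3 0 with hM3'
  have hM4n : 0 ≤ M4' := le_max_right _ _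
  have hM3n : 0 ≤ M3' := le_max_right _ _
  have hK4 : ∀ y ∈ Set.Icc (2*a-b) (2*b-a), |f4 y| ≤ M4' :=
    fun y hy => (hM4 y hy).trans (le_max_left _ _)
  have hK3 : ∀ y ∈ Set.Icc (2*a-b) (2*b-a), |f3 y| ≤ M3' :=
    fun y hy => (hM3 y hy).trans (le_max_left _ _)
  have hCpos : 0 < M4' * (b - a) / 12 + M3' + 1 := by
    nlinarith [mul_nonneg hM4n (show (0:ℝ) ≤ b - a by linarith)]
  refine ⟨M4' * (b - a) / 12 + M3' + 1, hCpos, ?_⟩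
  intro N hN
  set h : ℝ := (b - a) / N with hh
  have hN6 : (6:ℝ) ≤ (N:ℝ) := by exact_mod_cast hN
  have hNpos : (0:ℝ) < N := by linarith
  have hhpos : 0 < h := by rw [hh]; exact div_pos (by linarith) hNpos
  have hNh : (N:ℝ) * h = b - a := by rw [hh]; field_simp
  have h6 : 6 * h ≤ b - a := by nlinarith
  set u : ℕ → ℝ := fun i => f (a + i * h) with hu
  -- per-interval Euler–Maclaurin
  have EM : ∀ i ∈ Finset.range N,
      |(∫ t in (a + i*h)..(a + i*h + h), f t) - h/2*(f (a + i*h) + f (a + i*h + h))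
        + h^2/12*(f1 (a + i*h + h) - f1 (a + i*h))| ≤ M4' * h^2 / 12 * h^3 := by
    intro i hi
    have hiN : (i:ℝ) + 1 ≤ N := by exact_mod_cast Finset.mem_range.1 hi
    apply interval_EM d0 d1 d2 d3 hcont hhpos.le
    intro t ht
    apply hK4
    constructor
    · nlinarith [ht.1, mul_nonneg (Nat.cast_nonneg i : (0:ℝ) ≤ i) hhpos.le]
    · nlinarith [ht.2, mul_le_mul_of_nonneg_right hiN hhpos.le]
  set S : ℝ := ∑ i ∈ Finset.range N,
      ((∫ t in (a + i*h)..(a + i*h + h), f t) - h/2*(f (a + i*h) + f (a + i*h + h))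
        + h^2/12*(f1 (a + i*h + h) - f1 (a + i*h))) with hS
  have hSbound : |S| ≤ M4' * (b - a) / 12 * h^4 := by
    calc |S| ≤ ∑ i ∈ Finset.range N, (M4' * h^2 / 12 * h^3) :=
          (Finset.abs_sum_le_sum_abs _ _).trans (Finset.sum_le_sum EM)
      _ = (N:ℝ) * (M4' * h^2 / 12 * h^3) := by
          rw [Finset.sum_const, Finset.card_range, nsmul_eq_mul]
      _ = M4' * ((N:ℝ)*h) / 12 * h^4 := by ring
      _ = M4' * (b - a) / 12 * h^4 := by rw [hNh]
  -- decompose S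
  have harg : ∀ i : ℕ, a + i*h + h = a + (↑(i+1):ℝ)*h := by
    intro i; push_cast; ring
  have hsum1 : ∑ i ∈ Finset.range N, (∫ t in (a + i*h)..(a + i*h + h), f t)
      = ∫ t in a..b, f t := by
    have := intervalIntegral.sum_integral_adjacent_intervals
      (μ := volume) (a := fun i : ℕ => a + i*h) (n := N)
      (fun i _ => hcont.intervalIntegrable _ _)
    beta_reduce at this
    rw [show a + ((0:ℕ):ℝ)*h = a by push_cast; ring, show a + ((N:ℕ):ℝ)*h = b by
      push_cast; linarith [hNh]] at this
    rw [← this]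
    exact Finset.sum_congr rfl fun i _ => by rw [harg i]
  have hsum2 : ∑ i ∈ Finset.range N, (f1 (a + i*h + h) - f1 (a + i*h))
      = f1 b - f1 a := by
    have := Finset.sum_range_sub (f := fun i : ℕ => f1 (a + i*h)) N
    rw [show a + ((0:ℕ):ℝ)*h = a by push_cast; ring, show a + ((N:ℕ):ℝ)*h = b by
      push_cast; linarith [hNh]] at this
    rw [← this]
    exact Finset.sum_congr rfl fun i _ => by rw [harg i]
  have hSdec : S = (∫ t in a..b, f t)
      - ∑ i ∈ Finset.range N, (h/2*(u i + u (i+1)))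
      + h^2/12 * (f1 b - f1 a) := by
    rw [hS, Finset.sum_add_distrib, Finset.sum_sub_distrib, hsum1]
    congr 1
    · congr 1
      apply Finset.sum_congr rfl
      intro i _
      have : u (i+1) = f (a + i*h + h) := by rw [hu]; simp only; rw [harg i]
      rw [this, hu]
    · rw [← Finset.mul_sum, hsum2]
  -- trapezoid rearrangement
  obtain ⟨m, rfl⟩ : ∃ m, N = m + 1 := ⟨N - 1, by omega⟩
  have htrap : ∑ i ∈ Finset.range (m+1), (h/2*(u i + u (i+1)))
      = h/2*(u 0 + u (m+1)) + h * ∑ i ∈ Finset.range m, u (i+1) := by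
    rw [← Finset.mul_sum, Finset.sum_add_distrib,
      Finset.sum_range_succ' (fun i => u i) m, Finset.sum_range_succ (fun i => u (i+1)) m]
    ring
  -- Icc sum conversion
  have hIcc : ∑ i ∈ Finset.Icc (1:ℤ) (((m+1:ℕ):ℤ) - 1), f (a + (i:ℝ)*h)
      = ∑ i ∈ Finset.range m, u (i+1) := by
    have hmap : Finset.Icc (1:ℤ) (((m+1:ℕ):ℤ) - 1)
        = Finset.map ⟨fun j : ℕ => (j:ℤ)+1, fun x y hxy => by simpa using hxy⟩ (Finset.range m) := by
      ext i
      simp only [Finset.mem_Icc, Finset.mem_map, Finset.mem_range,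
        Function.Embedding.coeFn_mk]
      constructor
      · rintro ⟨h1, h2⟩; exact ⟨(i-1).toNat, by omega, by show ((i-1).toNat : ℤ) + 1 = i; omega⟩
      · rintro ⟨j, hj, rfl⟩; show 1 ≤ (j:ℤ)+1 ∧ (j:ℤ)+1 ≤ ((m+1:ℕ):ℤ) - 1; omega
    rw [hmap, Finset.sum_map]
    apply Finset.sum_congr rfl
    intro j _
    simp only [Function.Embedding.coeFn_mk, hu]
    change f (a + (((j:ℤ)+1 : ℤ) : ℝ) * h) = _
    first
    | (congr 1; push_cast; ring)
    | norm_num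
  -- psi bounds
  have hmem_a : ∀ T₀ : ℝ, T₀ ≤ 2*h → ∀ t ∈ Set.Icc (0:ℝ) T₀,
      |f3 (a - t)| ≤ M3' ∧ |f3 (a + t)| ≤ M3' := by
    intro T₀ hT₀ t ht
    constructor
    · apply hK3; constructor <;> linarith [ht.1, ht.2, hT₀, h6, hhpos.le]
    · apply hK3; constructor <;> linarith [ht.1, ht.2, hT₀, h6, hhpos.le]
  have hmem_b : ∀ T₀ : ℝ, T₀ ≤ 2*h → ∀ t ∈ Set.Icc (0:ℝ) T₀,
      |f3 (b - t)| ≤ M3' ∧ |f3 (b + t)| ≤ M3' := by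
    intro T₀ hT₀ t ht
    constructor
    · apply hK3; constructor <;> linarith [ht.1, ht.2, hT₀, h6, hhpos.le]
    · apply hK3; constructor <;> linarith [ht.1, ht.2, hT₀, h6, hhpos.le]
  have hpa1 : |f (a - h) - f (a + h) + 2*h*f1 a| ≤ 2*M3'*h^3 :=
    psi_bound d0 d1 d2 hhpos.le (hmem_a h (by linarith))
  have hpa2 : |f (a - 2*h) - f (a + 2*h) + 2*(2*h)*f1 a| ≤ 2*M3'*(2*h)^3 :=
    psi_bound d0 d1 d2 (by linarith) (hmem_a (2*h) le_rfl)
  have hpb1 : |f (b - h) - f (b + h) + 2*h*f1 b| ≤ 2*M3'*h^3 :=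
    psi_bound d0 d1 d2 hhpos.le (hmem_b h (by linarith))
  have hpb2 : |f (b - 2*h) - f (b + 2*h) + 2*(2*h)*f1 b| ≤ 2*M3'*(2*h)^3 :=
    psi_bound d0 d1 d2 (by linarith) (hmem_b (2*h) le_rfl)
  -- normalize the arguments appearing in the target
  have hu0 : u 0 = f a := by rw [hu]; norm_num
  have huN : u (m+1) = f b := by
    rw [hu]; simp only; congr 1; push_cast at hNh ⊢; linarith [hNh]
  rw [show a + 0 * h = a by ring,
    show a + ((m+1:ℕ):ℝ) * h = b by push_cast at hNh ⊢; linarith [hNh],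
    show a + (-2:ℝ) * h = a - 2*h by ring,
    show a + (2:ℝ) * h = a + 2*h by ring,
    show a + (((m+1:ℕ):ℝ) + 2) * h = b + 2*h by push_cast at hNh ⊢; linarith [hNh],
    show a + (((m+1:ℕ):ℝ) - 2) * h = b - 2*h by push_cast at hNh ⊢; linarith [hNh],
    show a + (-1:ℝ) * h = a - h by ring,
    show a + (1:ℝ) * h = a + h by ring,
    show a + (((m+1:ℕ):ℝ) + 1) * h = b + h by push_cast at hNh ⊢; linarith [hNh],
    show a + (((m+1:ℕ):ℝ) - 1) * h = b - h by push_cast at hNh ⊢; linarith [hNh],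
    hIcc]
  -- the key algebraic identity
  have key : (∫ x in a..b, f x) -
      (h/2 * (f a + f b) + h * ∑ i ∈ Finset.range m, u (i+1)
        - h/384 * (f (a - 2*h) - f (a + 2*h) + f (b + 2*h) - f (b - 2*h))
        - 7*h/192 * (f (a - h) - f (a + h) + f (b + h) - f (b - h)))
      = S + (h/384) * ((f (a - 2*h) - f (a + 2*h) + 2*(2*h)*f1 a)
            - (f (b - 2*h) - f (b + 2*h) + 2*(2*h)*f1 b))
          + (7*h/192) * ((f (a - h) - f (a + h) + 2*h*f1 a)
            - (f (b - h) - f (b + h) + 2*h*f1 b)) := by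
    rw [hSdec, htrap, hu0, huN]
    ring
  rw [key]
  -- final estimate
  have e1 : |(h/384) * ((f (a - 2*h) - f (a + 2*h) + 2*(2*h)*f1 a)
      - (f (b - 2*h) - f (b + 2*h) + 2*(2*h)*f1 b))| ≤ (h/384) * (32*M3'*h^3) := by
    rw [abs_mul, abs_of_nonneg (by positivity : (0:ℝ) ≤ h/384)]
    apply mul_le_mul_of_nonneg_left _ (by positivity)
    refine (abs_sub _ _).trans ?_
    nlinarith [hpa2, hpb2]
  have e2 : |(7*h/192) * ((f (a - h) - f (a + h) + 2*h*f1 a)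
      - (f (b - h) - f (b + h) + 2*h*f1 b))| ≤ (7*h/192) * (4*M3'*h^3) := by
    rw [abs_mul, abs_of_nonneg (by positivity : (0:ℝ) ≤ 7*h/192)]
    apply mul_le_mul_of_nonneg_left _ (by positivity)
    refine (abs_sub _ _).trans ?_
    nlinarith [hpa1, hpb1]
  have tri : |S + (h/384) * ((f (a - 2*h) - f (a + 2*h) + 2*(2*h)*f1 a)
      - (f (b - 2*h) - f (b + 2*h) + 2*(2*h)*f1 b))
      + (7*h/192) * ((f (a - h) - f (a + h) + 2*h*f1 a)
      - (f (b - h) - f (b + h) + 2*h*f1 b))|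
      ≤ |S| + |(h/384) * ((f (a - 2*h) - f (a + 2*h) + 2*(2*h)*f1 a)
      - (f (b - 2*h) - f (b + 2*h) + 2*(2*h)*f1 b))|
      + |(7*h/192) * ((f (a - h) - f (a + h) + 2*h*f1 a)
      - (f (b - h) - f (b + h) + 2*h*f1 b))| :=
    (abs_add_le _ _).trans (add_le_add_left (abs_add_le _ _) _)
  refine tri.trans ?_
  have hpow : (0:ℝ) ≤ h^4 := by positivity
  nlinarith [hSbound, e1, e2, mul_nonneg hM3n hpow]
end

section
/- Let a < b be real numbers and let f : ℝ → ℝ be four times continuously differentiable on ℝ. For N ∈ ℕ with N ≥ 6 set h = (b−a)/N, x_i = a + i·h, and define T^3_{[a,b],N}(f) = (h/2)(f(x_0) + f(x_N)) + h·Σ_{i=1}^{N−1} f(x_i) − (h/144)·(f(x_{−2}) − f(x_2) + f(x_{N+2}) − f(x_{N−2})) − (h/36)·(f(x_{−1}) − f(x_1) + f(x_{N+1}) − f(x_{N−1})). Then there exists a constant C > 0 such that for all N ≥ 6, |∫_a^b f(x) dx − T^3_{[a,b],N}(f)| ≤ C·h^4. -/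
open MeasureTheory intervalIntegral Set Nat


lemma iterDW_eq {n m : ℕ} {f : ℝ → ℝ} (hf : ContDiff ℝ (n:ℕ∞) f) {s : Set ℝ}
    (hs : UniqueDiffOn ℝ s) {x : ℝ} (hx : x ∈ s) (hmn : m ≤ n) :
    iteratedDerivWithin m f s x = iteratedDeriv m f x := by
  have h1 : HasFTaylorSeriesUpToOn (n:ℕ∞) f (ftaylorSeries ℝ f) s :=
    (contDiff_iff_ftaylorSeries.1 hf).hasFTaylorSeriesUpToOn s
  have h2 := h1.eq_iteratedFDerivWithin_of_uniqueDiffOn (by exact_mod_cast hmn) hs hx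
  rw [iteratedDerivWithin, iteratedDeriv, ← h2]
  rfl

lemma my_taylor_bound {f : ℝ → ℝ} {n : ℕ} (hf : ContDiff ℝ ((n:ℕ∞) + 1) f)
    {x₀ x C : ℝ} (hx : x₀ ≤ x)
    (hC : ∀ y ∈ Set.Icc x₀ x, |iteratedDeriv (n + 1) f y| ≤ C) :
    |f x - ∑ k ∈ Finset.range (n + 1), ((k ! : ℝ)⁻¹ * (x - x₀) ^ k) * iteratedDeriv k f x₀|
      ≤ C * (x - x₀) ^ (n + 1) / (n)! := by
  rcases eq_or_lt_of_le hx with rfl | hlt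
  · have : ∑ k ∈ Finset.range (n + 1), ((k ! : ℝ)⁻¹ * (x₀ - x₀) ^ k) * iteratedDeriv k f x₀
        = f x₀ := by
      rw [Finset.sum_eq_single 0]
      · simp
      · intro k _ hk
        simp [zero_pow hk]
      · simp
    simp only [sub_self] at this
    simp [this]
  · have hs := uniqueDiffOn_Icc hlt
    have hcd : ContDiffOn ℝ ((n:ℕ∞) + 1) f (Icc x₀ x) := hf.contDiffOn
    have hb := taylor_mean_remainder_bound (f := f) (n := n) hx
      (by exact_mod_cast hcd) (right_mem_Icc.2 hx)
      (fun y hy => by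
        rw [iterDW_eq (n := n+1) (by exact_mod_cast hf) hs hy le_rfl]
        simpa using hC y hy)
    rw [taylor_within_apply] at hb
    have hsum : ∀ k ∈ Finset.range (n+1),
        ((k ! : ℝ)⁻¹ * (x - x₀) ^ k) • iteratedDerivWithin k f (Icc x₀ x) x₀
          = ((k ! : ℝ)⁻¹ * (x - x₀) ^ k) * iteratedDeriv k f x₀ := by
      intro k hk
      rw [iterDW_eq (n := n+1) (by exact_mod_cast hf) hs (left_mem_Icc.2 hx)
        (by have := Finset.mem_range.1 hk; omega)]
      simp
    rw [Finset.sum_congr rfl hsum] at hb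
    simpa using hb
lemma local_est {f : ℝ → ℝ} (hf : ContDiff ℝ 4 f) {x h M : ℝ} (hh : 0 < h)
    (hM : ∀ y ∈ Set.Icc x (x + h), |iteratedDeriv 4 f y| ≤ M) :
    |(∫ t in x..(x + h), f t) - (h / 2) * (f x + f (x + h))
      + (h ^ 2 / 12) * (deriv f (x + h) - deriv f x)| ≤ M * h ^ 5 := by
  have hM0 : 0 ≤ M := le_trans (abs_nonneg _) (hM x (by constructor <;> nlinarith))
  set c0 := f x with hc0
  set c1 := deriv f x with hc1
  set c2 := iteratedDeriv 2 f x with hc2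
  set c3 := iteratedDeriv 3 f x with hc3
  set P : ℝ → ℝ := fun s => c0 + c1 * s + c2 / 2 * s ^ 2 + c3 / 6 * s ^ 3 with hP
  have hf4 : ContDiff ℝ ((3:ℕ∞) + 1) f := by exact_mod_cast hf
  -- Taylor bound for f
  have tb : ∀ s ∈ Set.Icc (0:ℝ) h, |f (x + s) - P s| ≤ M * s ^ 4 / 6 := by
    intro s hs
    have hxs : x ≤ x + s := by linarith [hs.1]
    have hb := my_taylor_bound (n := 3) hf4 hxs (C := M)
      (fun y hy => hM y ⟨hy.1, le_trans hy.2 (by linarith [hs.2])⟩)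
    have hsum : ∑ k ∈ Finset.range 4, ((k ! : ℝ)⁻¹ * (x + s - x) ^ k) * iteratedDeriv k f x
        = P s := by
      rw [Finset.sum_range_succ, Finset.sum_range_succ, Finset.sum_range_succ,
        Finset.sum_range_succ, Finset.sum_range_zero]
      simp [hP, ← hc1, ← hc2, ← hc3, hc0, iteratedDeriv_one]
      norm_num [factorial]
      ring
    rw [hsum] at hb
    calc |f (x + s) - P s| ≤ M * (x + s - x) ^ 4 / 3! := hb
      _ = M * s ^ 4 / 6 := by norm_num [factorial]
  -- Taylor bound for f'
  have hdf : ContDiff ℝ ((2:ℕ∞) + 1) (deriv f) := by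
    have := (contDiff_succ_iff_deriv.mp hf4).2.2
    exact_mod_cast this
  have tb1 : |deriv f (x + h) - (c1 + c2 * h + c3 / 2 * h ^ 2)| ≤ M * h ^ 3 / 2 := by
    have hb := my_taylor_bound (n := 2) hdf (le_of_lt (by linarith : x < x + h)) (C := M)
      (fun y hy => by
        rw [show (2 + 1 : ℕ) = 3 from rfl, ← iteratedDeriv_succ']
        exact hM y hy)
    have hsum : ∑ k ∈ Finset.range 3, ((k ! : ℝ)⁻¹ * (x + h - x) ^ k) * iteratedDeriv k (deriv f) x
        = c1 + c2 * h + c3 / 2 * h ^ 2 := by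
      rw [Finset.sum_range_succ, Finset.sum_range_succ, Finset.sum_range_succ,
        Finset.sum_range_zero]
      have e1 : iteratedDeriv 0 (deriv f) x = c1 := by simp [hc1]
      have e2 : iteratedDeriv 1 (deriv f) x = c2 := by
        rw [← iteratedDeriv_succ']
      have e3 : iteratedDeriv 2 (deriv f) x = c3 := by
        rw [← iteratedDeriv_succ']
      rw [e1, e2, e3]
      norm_num [factorial]
      ring
    rw [hsum] at hb
    calc _ ≤ M * (x + h - x) ^ 3 / 2! := hb
      _ = M * h ^ 3 / 2 := by norm_num [factorial]
  -- integral computations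
  have hcont : Continuous f := hf.continuous
  have hcs : Continuous (fun s : ℝ => f (x + s)) := hcont.comp (by continuity)
  have hPc : Continuous P := by fun_prop
  have hshift : (∫ t in x..(x + h), f t) = ∫ s in (0:ℝ)..h, f (x + s) := by
    rw [intervalIntegral.integral_comp_add_left f x]
    norm_num
  have hsplit : (∫ s in (0:ℝ)..h, f (x + s))
      = (∫ s in (0:ℝ)..h, (f (x + s) - P s)) + ∫ s in (0:ℝ)..h, P s := by
    rw [← intervalIntegral.integral_add (f := fun s => f (x + s) - P s) ((hcs.sub hPc).intervalIntegrable _ _)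
      (hPc.intervalIntegrable _ _)]
    simp
  have hPint : (∫ s in (0:ℝ)..h, P s) = c0 * h + c1 * h ^ 2 / 2 + c2 * h ^ 3 / 6 + c3 * h ^ 4 / 24 := by
    have key : ∀ s ∈ Set.uIcc (0:ℝ) h,
        HasDerivAt (fun u => c0 * u + c1 / 2 * u ^ 2 + c2 / 6 * u ^ 3 + c3 / 24 * u ^ 4) (P s) s := by
      intro s _
      have h1 : HasDerivAt (fun u : ℝ => c0 * u) c0 s := by
        simpa using (hasDerivAt_id s).const_mul c0
      have h2 : HasDerivAt (fun u : ℝ => c1 / 2 * u ^ 2) (c1 * s) s := by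
        have := (hasDerivAt_pow 2 s).const_mul (c1 / 2)
        refine this.congr_deriv ?_; push_cast; ring
      have h3 : HasDerivAt (fun u : ℝ => c2 / 6 * u ^ 3) (c2 / 2 * s ^ 2) s := by
        have := (hasDerivAt_pow 3 s).const_mul (c2 / 6)
        refine this.congr_deriv ?_; push_cast; ring
      have h4 : HasDerivAt (fun u : ℝ => c3 / 24 * u ^ 4) (c3 / 6 * s ^ 3) s := by
        have := (hasDerivAt_pow 4 s).const_mul (c3 / 24)
        refine this.congr_deriv ?_; push_cast; ring
      exact ((h1.add h2).add h3).add h4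
    rw [intervalIntegral.integral_eq_sub_of_hasDerivAt key (hPc.intervalIntegrable _ _)]
    ring
  -- assembly
  set A := ∫ s in (0:ℝ)..h, (f (x + s) - P s) with hA
  have hid : (∫ t in x..(x + h), f t) - (h / 2) * (f x + f (x + h))
      + (h ^ 2 / 12) * (deriv f (x + h) - deriv f x)
      = A - (h / 2) * (f (x + h) - P h)
        + (h ^ 2 / 12) * (deriv f (x + h) - (c1 + c2 * h + c3 / 2 * h ^ 2)) := by
    rw [hshift, hsplit, hPint, ← hc0, ← hc1, hP]
    ring
  have hAb : |A| ≤ M * h ^ 4 / 6 * h := by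
    have := intervalIntegral.norm_integral_le_of_norm_le_const (C := M * h ^ 4 / 6)
      (f := fun s => f (x + s) - P s) (a := 0) (b := h) (fun s hs => by
        rw [Set.uIoc_of_le hh.le] at hs
        have hs' : s ∈ Set.Icc (0:ℝ) h := ⟨hs.1.le, hs.2⟩
        calc |f (x + s) - P s| ≤ M * s ^ 4 / 6 := tb s hs'
          _ ≤ M * h ^ 4 / 6 := by
            have : s ^ 4 ≤ h ^ 4 := pow_le_pow_left₀ hs'.1 hs'.2 4
            nlinarith)
    rw [hA]
    calc |∫ s in (0:ℝ)..h, (f (x + s) - P s)| ≤ M * h ^ 4 / 6 * |h - 0| := this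
      _ = M * h ^ 4 / 6 * h := by rw [sub_zero, abs_of_pos hh]
  have hRb : |f (x + h) - P h| ≤ M * h ^ 4 / 6 := by
    simpa using tb h ⟨hh.le, le_rfl⟩
  rw [hid]
  have step : |A - (h / 2) * (f (x + h) - P h)
      + (h ^ 2 / 12) * (deriv f (x + h) - (c1 + c2 * h + c3 / 2 * h ^ 2))|
      ≤ |A| + (h / 2) * |f (x + h) - P h|
        + (h ^ 2 / 12) * |deriv f (x + h) - (c1 + c2 * h + c3 / 2 * h ^ 2)| := by
    calc _ ≤ |A - (h / 2) * (f (x + h) - P h)|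
        + |(h ^ 2 / 12) * (deriv f (x + h) - (c1 + c2 * h + c3 / 2 * h ^ 2))| := abs_add_le _ _
      _ ≤ |A| + |(h / 2) * (f (x + h) - P h)|
          + |(h ^ 2 / 12) * (deriv f (x + h) - (c1 + c2 * h + c3 / 2 * h ^ 2))| := by
            gcongr; exact abs_sub _ _
      _ = _ := by
        rw [abs_mul, abs_mul, abs_of_pos (by positivity : (0:ℝ) < h / 2),
          abs_of_pos (by positivity : (0:ℝ) < h ^ 2 / 12)]
  refine le_trans step ?_
  have h5 : (0:ℝ) < h := hh
  nlinarith [hAb, hRb, tb1, abs_nonneg A, abs_nonneg (f (x + h) - P h),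
    abs_nonneg (deriv f (x + h) - (c1 + c2 * h + c3 / 2 * h ^ 2)), pow_pos hh 2, pow_pos hh 3, pow_pos hh 5]
lemma sym_est {f : ℝ → ℝ} (hf : ContDiff ℝ 4 f) {x t M : ℝ} (ht : 0 < t)
    (hM : ∀ y ∈ Set.Icc (x - t) (x + t), |iteratedDeriv 3 f y| ≤ M) :
    |f (x + t) - f (x - t) - 2 * deriv f x * t| ≤ M * t ^ 3 := by
  have hfd : Differentiable ℝ f := hf.differentiable (by norm_num)
  have hd1d : Differentiable ℝ (deriv f) := by
    have h3 : ContDiff ℝ ((2:ℕ∞)+1) (deriv f) := by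
      have hf4 : ContDiff ℝ ((3:ℕ∞) + 1) f := by exact_mod_cast hf
      exact_mod_cast (contDiff_succ_iff_deriv.mp hf4).2.2
    exact h3.differentiable (by norm_num)
  have hd2d : Differentiable ℝ (iteratedDeriv 2 f) := by
    apply hf.differentiable_iteratedDeriv 2
    norm_num
  set g : ℝ → ℝ := fun u => f (x + u) - f (x - u) - 2 * deriv f x * u with hgdef
  have hp : ∀ (F : ℝ → ℝ), Differentiable ℝ F → ∀ u : ℝ,
      HasDerivAt (fun v => F (x + v)) (deriv F (x + u)) u := by
    intro F hF u
    simpa [Function.comp_def] using ((hF (x + u)).hasDerivAt).comp u ((hasDerivAt_id u).const_add x)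
  have hm : ∀ (F : ℝ → ℝ), Differentiable ℝ F → ∀ u : ℝ,
      HasDerivAt (fun v => F (x - v)) (-deriv F (x - u)) u := by
    intro F hF u
    simpa [Function.comp_def] using ((hF (x - u)).hasDerivAt).comp u ((hasDerivAt_id u).const_sub x)
  have dg : deriv g = fun u => deriv f (x + u) + deriv f (x - u) - 2 * deriv f x := by
    funext u
    have hlin : HasDerivAt (fun v : ℝ => 2 * deriv f x * v) (2 * deriv f x) u := by
      simpa using (hasDerivAt_id u).const_mul (2 * deriv f x)
    have hg' : HasDerivAt g (deriv f (x + u) - -deriv f (x - u) - 2 * deriv f x) u :=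
      ((hp f hfd u).sub (hm f hfd u)).sub hlin
    rw [hg'.deriv]; ring
  have e2 : deriv (deriv f) = iteratedDeriv 2 f := by
    rw [iteratedDeriv_succ', iteratedDeriv_one]
  have e3 : deriv (iteratedDeriv 2 f) = iteratedDeriv 3 f := (iteratedDeriv_succ).symm
  have dg1 : deriv (fun u => deriv f (x + u) + deriv f (x - u) - 2 * deriv f x)
      = fun u => iteratedDeriv 2 f (x + u) - iteratedDeriv 2 f (x - u) := by
    funext u
    have hg' : HasDerivAt (fun u => deriv f (x + u) + deriv f (x - u) - 2 * deriv f x)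
        (deriv (deriv f) (x + u) + -deriv (deriv f) (x - u) - 0) u :=
      ((hp (deriv f) hd1d u).add (hm (deriv f) hd1d u)).sub (hasDerivAt_const u _)
    rw [hg'.deriv, e2]; ring
  have dg2 : deriv (fun u => iteratedDeriv 2 f (x + u) - iteratedDeriv 2 f (x - u))
      = fun u => iteratedDeriv 3 f (x + u) + iteratedDeriv 3 f (x - u) := by
    funext u
    have hg' : HasDerivAt (fun u => iteratedDeriv 2 f (x + u) - iteratedDeriv 2 f (x - u))
        (deriv (iteratedDeriv 2 f) (x + u) - -deriv (iteratedDeriv 2 f) (x - u)) u :=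
      (hp _ hd2d u).sub (hm _ hd2d u)
    rw [hg'.deriv, e3]; ring
  have I1 : iteratedDeriv 1 g = fun u => deriv f (x + u) + deriv f (x - u) - 2 * deriv f x := by
    rw [iteratedDeriv_one, dg]
  have I2 : iteratedDeriv 2 g = fun u => iteratedDeriv 2 f (x + u) - iteratedDeriv 2 f (x - u) := by
    rw [iteratedDeriv_succ, I1, dg1]
  have I3 : iteratedDeriv 3 g = fun u => iteratedDeriv 3 f (x + u) + iteratedDeriv 3 f (x - u) := by
    rw [iteratedDeriv_succ, I2, dg2]
  have hg : ContDiff ℝ ((2:ℕ∞) + 1) g := by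
    have h1 : ContDiff ℝ 3 (fun u : ℝ => f (x + u)) :=
      (hf.of_le (by norm_num)).comp (contDiff_const.add contDiff_id)
    have h2 : ContDiff ℝ 3 (fun u : ℝ => f (x - u)) :=
      (hf.of_le (by norm_num)).comp (contDiff_const.sub contDiff_id)
    have h3 : ContDiff ℝ 3 (fun u : ℝ => 2 * deriv f x * u) :=
      contDiff_const.mul contDiff_id
    exact_mod_cast (h1.sub h2).sub h3
  have hb := my_taylor_bound (n := 2) hg ht.le (C := 2 * M) (x₀ := 0) (x := t)
    (fun y hy => by
      rw [I3]
      have hy1 : x + y ∈ Set.Icc (x - t) (x + t) := by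
        constructor <;> [linarith [hy.1, ht.le]; linarith [hy.2]]
      have hy2 : x - y ∈ Set.Icc (x - t) (x + t) := by
        constructor <;> [linarith [hy.2]; linarith [hy.1]]
      calc |iteratedDeriv 3 f (x + y) + iteratedDeriv 3 f (x - y)|
          ≤ |iteratedDeriv 3 f (x + y)| + |iteratedDeriv 3 f (x - y)| := abs_add_le _ _
        _ ≤ M + M := add_le_add (hM _ hy1) (hM _ hy2)
        _ = 2 * M := by ring)
  have hz0 : g 0 = 0 := by simp [hgdef]
  have hz1 : iteratedDeriv 1 g 0 = 0 := by rw [I1]; simp; ring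
  have hz2 : iteratedDeriv 2 g 0 = 0 := by rw [I2]; simp
  have hsum : ∑ k ∈ Finset.range 3, ((k ! : ℝ)⁻¹ * (t - 0) ^ k) * iteratedDeriv k g 0 = 0 := by
    rw [Finset.sum_range_succ, Finset.sum_range_succ, Finset.sum_range_succ,
      Finset.sum_range_zero]
    rw [iteratedDeriv_zero] at *
    rw [hz0, hz1, hz2]
    ring
  rw [hsum, sub_zero] at hb
  have : g t = f (x + t) - f (x - t) - 2 * deriv f x * t := rfl
  rw [this] at hb
  calc |f (x + t) - f (x - t) - 2 * deriv f x * t| ≤ 2 * M * (t - 0) ^ (2 + 1) / 2! := hb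
    _ = M * t ^ 3 := by norm_num [factorial]; ring
set_option maxHeartbeats 1000000 in
/-- Error bound for the composite B-spline rule `T³_{[a,b],N}` (case `p = 3` of the
Proposition): for `f ∈ C⁴`, the error is `O(h⁴)` with `h = (b-a)/N`. -/
theorem T3_error_order_four (a b : ℝ) (hab : a < b) (f : ℝ → ℝ)
    (hf : ContDiff ℝ 4 f) :
    ∃ C > 0, ∀ N : ℕ, 6 ≤ N →
      |(∫ x in a..b, f x) -
          ((((b - a) / N) / 2) * (f (a + 0 * ((b - a) / N)) + f (a + (N : ℝ) * ((b - a) / N)))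
            + ((b - a) / N) * ∑ i ∈ Finset.Icc (1 : ℤ) ((N : ℤ) - 1),
                f (a + (i : ℝ) * ((b - a) / N))
            - (((b - a) / N) / 144) *
                (f (a + (-2 : ℝ) * ((b - a) / N)) - f (a + (2 : ℝ) * ((b - a) / N))
                  + f (a + ((N : ℝ) + 2) * ((b - a) / N))
                  - f (a + ((N : ℝ) - 2) * ((b - a) / N)))
            - (((b - a) / N) / 36) *
                (f (a + (-1 : ℝ) * ((b - a) / N)) - f (a + (1 : ℝ) * ((b - a) / N))
                  + f (a + ((N : ℝ) + 1) * ((b - a) / N))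
                  - f (a + ((N : ℝ) - 1) * ((b - a) / N))))| ≤
        C * ((b - a) / N) ^ 4 := by
  have hba : (0:ℝ) < b - a := sub_pos.2 hab
  obtain ⟨M3, hM3n, hM3⟩ : ∃ M, 0 ≤ M ∧
      ∀ y ∈ Set.Icc (a - (b - a)) (b + (b - a)), |iteratedDeriv 3 f y| ≤ M := by
    obtain ⟨C3, hC3⟩ := (isCompact_Icc (a := a - (b - a)) (b := b + (b - a))).exists_bound_of_continuousOn
      ((hf.continuous_iteratedDeriv 3 (by norm_num)).continuousOn)
    exact ⟨max C3 0, le_max_right _ _, fun y hy => le_trans (hC3 y hy) (le_max_left _ _)⟩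
  obtain ⟨M4, hM4n, hM4⟩ : ∃ M, 0 ≤ M ∧
      ∀ y ∈ Set.Icc (a - (b - a)) (b + (b - a)), |iteratedDeriv 4 f y| ≤ M := by
    obtain ⟨C4, hC4⟩ := (isCompact_Icc (a := a - (b - a)) (b := b + (b - a))).exists_bound_of_continuousOn
      ((hf.continuous_iteratedDeriv 4 (by norm_num)).continuousOn)
    exact ⟨max C4 0, le_max_right _ _, fun y hy => le_trans (hC4 y hy) (le_max_left _ _)⟩
  refine ⟨M4 * (b - a) + M3 + 1, by nlinarith, ?_⟩
  intro N hN
  obtain ⟨m, rfl⟩ : ∃ m, N = m + 1 := ⟨N - 1, by omega⟩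
  have hNr : (6:ℝ) ≤ ((m + 1 : ℕ) : ℝ) := by exact_mod_cast hN
  have hN0 : (0:ℝ) < ((m + 1 : ℕ) : ℝ) := by linarith
  obtain ⟨h, hhdef⟩ : ∃ h : ℝ, h = (b - a) / ((m + 1 : ℕ) : ℝ) := ⟨_, rfl⟩
  rw [← hhdef]
  have hh : 0 < h := hhdef ▸ div_pos hba hN0
  have hNh : ((m + 1 : ℕ) : ℝ) * h = b - a := by
    rw [hhdef]; field_simp
  have h6 : 6 * h ≤ b - a := by nlinarith
  -- point rewrites
  have p0 : a + 0 * h = a := by ring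
  have pN : a + ((m + 1 : ℕ) : ℝ) * h = b := by linarith [hNh]
  have pm2 : a + (-2:ℝ) * h = a - 2 * h := by ring
  have pN2 : a + (((m + 1 : ℕ) : ℝ) + 2) * h = b + 2 * h := by
    calc a + (((m + 1 : ℕ) : ℝ) + 2) * h = (a + ((m + 1 : ℕ) : ℝ) * h) + 2 * h := by ring
      _ = b + 2 * h := by rw [pN]
  have pN2' : a + (((m + 1 : ℕ) : ℝ) - 2) * h = b - 2 * h := by
    calc a + (((m + 1 : ℕ) : ℝ) - 2) * h = (a + ((m + 1 : ℕ) : ℝ) * h) - 2 * h := by ring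
      _ = b - 2 * h := by rw [pN]
  have pm1 : a + (-1:ℝ) * h = a - 1 * h := by ring
  have p1 : a + (1:ℝ) * h = a + 1 * h := by ring
  have pN1 : a + (((m + 1 : ℕ) : ℝ) + 1) * h = b + 1 * h := by
    calc a + (((m + 1 : ℕ) : ℝ) + 1) * h = (a + ((m + 1 : ℕ) : ℝ) * h) + 1 * h := by ring
      _ = b + 1 * h := by rw [pN]
  have pN1' : a + (((m + 1 : ℕ) : ℝ) - 1) * h = b - 1 * h := by
    calc a + (((m + 1 : ℕ) : ℝ) - 1) * h = (a + ((m + 1 : ℕ) : ℝ) * h) - 1 * h := by ring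
      _ = b - 1 * h := by rw [pN]
  rw [p0, pN, pm2, pN2, pN2', pm1, p1, pN1, pN1']
  -- the Z-sum
  have zconv : ∑ i ∈ Finset.Icc (1 : ℤ) (((m + 1 : ℕ) : ℤ) - 1), f (a + (i : ℝ) * h)
      = ∑ i ∈ Finset.range m, f (a + ((i:ℝ) + 1) * h) := by
    rw [show (((m + 1 : ℕ) : ℤ) - 1) = (m:ℤ) by push_cast; ring]
    refine Finset.sum_nbij' (i := fun (j : ℤ) => (j - 1).toNat) (j := fun (i : ℕ) => (i:ℤ) + 1)
      ?_ ?_ ?_ ?_ ?_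
    · intro j hj
      simp only [Finset.mem_Icc] at hj
      simp only [Finset.mem_range]
      omega
    · intro i hi
      simp only [Finset.mem_range] at hi
      simp only [Finset.mem_Icc]
      omega
    · intro j hj
      simp only [Finset.mem_Icc] at hj
      show ((j - 1).toNat : ℤ) + 1 = j
      omega
    · intro i _
      show ((i:ℤ) + 1 - 1).toNat = i
      omega
    · intro j hj
      simp only [Finset.mem_Icc] at hj
      show f (a + (j:ℝ) * h) = f (a + (((j - 1).toNat : ℝ) + 1) * h)
      have hc : (((j - 1).toNat : ℕ) : ℝ) = (j : ℝ) - 1 := by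
        exact_mod_cast congrArg (Int.cast : ℤ → ℝ) (Int.toNat_of_nonneg (by omega : (0:ℤ) ≤ j - 1))
      rw [hc]
      ring_nf
  -- telescoping pieces
  have E1 : ∑ i ∈ Finset.range (m + 1), ∫ t in (a + (i:ℝ) * h)..(a + (i:ℝ) * h + h), f t
      = ∫ t in a..b, f t := by
    have key := intervalIntegral.sum_integral_adjacent_intervals (μ := volume)
      (a := fun k : ℕ => a + (k:ℝ) * h) (n := m + 1)
      (fun k _ => hf.continuous.intervalIntegrable _ _)
    rw [Finset.sum_congr rfl (fun i _ => by
      rw [show a + (i:ℝ) * h + h = a + ((i+1:ℕ):ℝ) * h by push_cast; ring])]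
    rw [key]
    show (∫ x in (a + ((0:ℕ):ℝ) * h)..(a + ((m + 1 : ℕ):ℝ) * h), f x) = _
    have e0 : a + ((0:ℕ):ℝ) * h = a := by push_cast; ring
    rw [e0, pN]
  have E2 : ∑ i ∈ Finset.range (m + 1), (h / 2) * (f (a + (i:ℝ) * h) + f (a + (i:ℝ) * h + h))
      = (h / 2) * (f a + f b)
        + h * ∑ i ∈ Finset.range m, f (a + ((i:ℝ) + 1) * h) := by
    have hs1 : ∑ i ∈ Finset.range (m + 1), f (a + (i:ℝ) * h)
        = (∑ i ∈ Finset.range m, f (a + ((i:ℝ) + 1) * h)) + f a := by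
      rw [Finset.sum_range_succ']
      congr 1
      · refine Finset.sum_congr rfl (fun i _ => ?_)
        congr 1
        push_cast
        ring
      · congr 1
        push_cast
        ring
    have hs2 : ∑ i ∈ Finset.range (m + 1), f (a + (i:ℝ) * h + h)
        = (∑ i ∈ Finset.range m, f (a + ((i:ℝ) + 1) * h)) + f b := by
      rw [Finset.sum_range_succ]
      congr 1
      · refine Finset.sum_congr rfl (fun i _ => ?_)
        congr 1
        push_cast
        ring
      · rw [show a + (m:ℝ) * h + h = a + ((m + 1 : ℕ) : ℝ) * h by push_cast; ring, pN]
    rw [← Finset.mul_sum, Finset.sum_add_distrib, hs1, hs2]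
    ring
  have E3 : ∑ i ∈ Finset.range (m + 1),
      (h ^ 2 / 12) * (deriv f (a + (i:ℝ) * h + h) - deriv f (a + (i:ℝ) * h))
      = (h ^ 2 / 12) * (deriv f b - deriv f a) := by
    rw [← Finset.mul_sum]
    congr 1
    rw [Finset.sum_congr rfl (fun i _ => by
      rw [show a + (i:ℝ) * h + h = a + ((i+1:ℕ):ℝ) * h by push_cast; ring])]
    rw [Finset.sum_range_sub (fun i : ℕ => deriv f (a + (i:ℝ) * h))]
    rw [pN]
    norm_num
  -- local bounds
  have hloc : ∀ i ∈ Finset.range (m + 1),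
      |(∫ t in (a + (i:ℝ) * h)..(a + (i:ℝ) * h + h), f t)
        - (h / 2) * (f (a + (i:ℝ) * h) + f (a + (i:ℝ) * h + h))
        + (h ^ 2 / 12) * (deriv f (a + (i:ℝ) * h + h) - deriv f (a + (i:ℝ) * h))| ≤ M4 * h ^ 5 := by
    intro i hi
    have hiN : (i:ℝ) + 1 ≤ ((m + 1 : ℕ) : ℝ) := by
      exact_mod_cast Nat.succ_le_of_lt (Finset.mem_range.1 hi)
    refine local_est hf hh (fun y hy => hM4 y ?_)
    have h0i : (0:ℝ) ≤ (i:ℝ) * h := mul_nonneg (Nat.cast_nonneg i) hh.le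
    have h1 : a ≤ a + (i:ℝ) * h := by linarith
    have expand : (i:ℝ) * h + h = ((i:ℝ) + 1) * h := by ring
    have h2' : ((i:ℝ) + 1) * h ≤ ((m + 1 : ℕ) : ℝ) * h := mul_le_mul_of_nonneg_right hiN hh.le
    have h2 : a + (i:ℝ) * h + h ≤ b := by
      have := hNh
      linarith [expand, h2']
    exact ⟨by linarith [hy.1], by linarith [hy.2]⟩
  have hS : |(∫ t in a..b, f t) - ((h / 2) * (f a + f b)
        + h * ∑ i ∈ Finset.range m, f (a + ((i:ℝ) + 1) * h))
      + (h ^ 2 / 12) * (deriv f b - deriv f a)| ≤ M4 * (b - a) * h ^ 4 := by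
    have hsum : (∫ t in a..b, f t) - ((h / 2) * (f a + f b)
          + h * ∑ i ∈ Finset.range m, f (a + ((i:ℝ) + 1) * h))
        + (h ^ 2 / 12) * (deriv f b - deriv f a)
        = ∑ i ∈ Finset.range (m + 1),
            ((∫ t in (a + (i:ℝ) * h)..(a + (i:ℝ) * h + h), f t)
              - (h / 2) * (f (a + (i:ℝ) * h) + f (a + (i:ℝ) * h + h))
              + (h ^ 2 / 12) * (deriv f (a + (i:ℝ) * h + h) - deriv f (a + (i:ℝ) * h))) := by
      rw [Finset.sum_add_distrib, Finset.sum_sub_distrib, E1, E2, E3]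
    rw [hsum]
    calc |∑ i ∈ Finset.range (m + 1), _| ≤ ∑ i ∈ Finset.range (m + 1), (M4 * h ^ 5) :=
          le_trans (Finset.abs_sum_le_sum_abs _ _) (Finset.sum_le_sum hloc)
      _ = ((m + 1 : ℕ) : ℝ) * (M4 * h ^ 5) := by
          rw [Finset.sum_const, Finset.card_range]; push_cast; ring
      _ = M4 * (((m + 1 : ℕ) : ℝ) * h) * h ^ 4 := by ring
      _ = M4 * (b - a) * h ^ 4 := by rw [hNh]
  -- boundary bounds
  have hsym : ∀ x : ℝ, a ≤ x → x ≤ b → ∀ t : ℝ, 0 < t → t ≤ 2 * h →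
      |f (x + t) - f (x - t) - 2 * deriv f x * t| ≤ M3 * t ^ 3 := by
    intro x hxa hxb t ht ht2
    refine sym_est hf ht (fun y hy => hM3 y ?_)
    exact ⟨by linarith [hy.1, hh.le], by linarith [hy.2, hh.le]⟩
  have ha2 := hsym a le_rfl hab.le (2 * h) (by linarith) le_rfl
  have hb2 := hsym b hab.le le_rfl (2 * h) (by linarith) le_rfl
  have ha1 := hsym a le_rfl hab.le (1 * h) (by linarith) (by linarith)
  have hb1 := hsym b hab.le le_rfl (1 * h) (by linarith) (by linarith)
  -- final assembly
  obtain ⟨S, hSdef⟩ : ∃ S : ℝ, S = (∫ t in a..b, f t) - ((h / 2) * (f a + f b)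
      + h * ∑ i ∈ Finset.range m, f (a + ((i:ℝ) + 1) * h))
      + (h ^ 2 / 12) * (deriv f b - deriv f a) := ⟨_, rfl⟩
  obtain ⟨Da2, hDa2⟩ : ∃ D : ℝ, D = f (a + 2 * h) - f (a - 2 * h) - 2 * deriv f a * (2 * h) := ⟨_, rfl⟩
  obtain ⟨Db2, hDb2⟩ : ∃ D : ℝ, D = f (b + 2 * h) - f (b - 2 * h) - 2 * deriv f b * (2 * h) := ⟨_, rfl⟩
  obtain ⟨Da1, hDa1⟩ : ∃ D : ℝ, D = f (a + 1 * h) - f (a - 1 * h) - 2 * deriv f a * (1 * h) := ⟨_, rfl⟩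
  obtain ⟨Db1, hDb1⟩ : ∃ D : ℝ, D = f (b + 1 * h) - f (b - 1 * h) - 2 * deriv f b * (1 * h) := ⟨_, rfl⟩
  rw [← hSdef] at hS
  rw [← hDa2] at ha2
  rw [← hDb2] at hb2
  rw [← hDa1] at ha1
  rw [← hDb1] at hb1
  have decomp : (∫ x in a..b, f x) -
      ((h / 2) * (f a + f b) + h * ∑ i ∈ Finset.Icc (1 : ℤ) (((m + 1 : ℕ) : ℤ) - 1), f (a + (i : ℝ) * h)
        - (h / 144) * (f (a - 2 * h) - f (a + 2 * h) + f (b + 2 * h) - f (b - 2 * h))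
        - (h / 36) * (f (a - 1 * h) - f (a + 1 * h) + f (b + 1 * h) - f (b - 1 * h)))
      = S + (h / 144) * (Db2 - Da2) + (h / 36) * (Db1 - Da1) := by
    rw [zconv, hSdef, hDa2, hDb2, hDa1, hDb1]
    ring
  rw [decomp]
  have habs : |S + (h / 144) * (Db2 - Da2) + (h / 36) * (Db1 - Da1)|
      ≤ |S| + (h / 144) * (|Db2| + |Da2|) + (h / 36) * (|Db1| + |Da1|) := by
    calc |S + (h / 144) * (Db2 - Da2) + (h / 36) * (Db1 - Da1)|
        ≤ |S + (h / 144) * (Db2 - Da2)| + |(h / 36) * (Db1 - Da1)| := abs_add_le _ _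
      _ ≤ |S| + |(h / 144) * (Db2 - Da2)| + |(h / 36) * (Db1 - Da1)| := by
          gcongr; exact abs_add_le _ _
      _ ≤ _ := by
          rw [abs_mul, abs_mul, abs_of_pos (by positivity : (0:ℝ) < h / 144),
            abs_of_pos (by positivity : (0:ℝ) < h / 36)]
          gcongr <;> exact abs_sub _ _
  refine le_trans habs ?_
  have B2 : (h / 144) * (|Db2| + |Da2|) ≤ M3 * h ^ 4 / 9 := by
    have hsum2 : |Db2| + |Da2| ≤ 16 * M3 * h ^ 3 := by
      have e : M3 * (2 * h) ^ 3 = 8 * M3 * h ^ 3 := by ring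
      linarith [ha2, hb2]
    calc (h / 144) * (|Db2| + |Da2|) ≤ (h / 144) * (16 * M3 * h ^ 3) := by
          apply mul_le_mul_of_nonneg_left hsum2 (by positivity)
      _ = M3 * h ^ 4 / 9 := by ring
  have B1 : (h / 36) * (|Db1| + |Da1|) ≤ M3 * h ^ 4 / 18 := by
    have hsum1 : |Db1| + |Da1| ≤ 2 * M3 * h ^ 3 := by
      have e : M3 * (1 * h) ^ 3 = M3 * h ^ 3 := by ring
      linarith [ha1, hb1]
    calc (h / 36) * (|Db1| + |Da1|) ≤ (h / 36) * (2 * M3 * h ^ 3) := by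
          apply mul_le_mul_of_nonneg_left hsum1 (by positivity)
      _ = M3 * h ^ 4 / 18 := by ring
  have hh4 : (0:ℝ) < h ^ 4 := by positivity
  have hfin : |S| ≤ M4 * (b - a) * h ^ 4 := hS
  nlinarith [mul_nonneg hM3n hh4.le]
end
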